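/- arXiv:2402.10716 — 3 statements merged into one kernel-verified Lean document; each statement's English description precedes it below -/
import Mathlib

section
/- For a smooth strictly positive function ϱ on a domain Ω ⊂ ℝ³ (torus or ℝ³ with decay), one has ∫_Ω ϱ |∇² log ϱ|² dx ≥ (1/7) ∫_Ω |∇²√ϱ|² dx. -/
open MeasureTheory

/-- The `(i,j)` entry of the Hessian of `f : ℝ³ → ℝ` at `x`. -/
noncomputable def hess3 (f : (Fin 3 → ℝ) → ℝ) (x : Fin 3 → ℝ) (i j : Fin 3) : ℝ :=
  fderiv ℝ (fun y => fderiv ℝ f y (Pi.single i 1)) x (Pi.single j 1)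

namespace JungelAux

/-- partial derivative in direction `i` -/
noncomputable def pd3 (f : (Fin 3 → ℝ) → ℝ) (i : Fin 3) (x : Fin 3 → ℝ) : ℝ :=
  fderiv ℝ f x (Pi.single i 1)

lemma contDiff_pd3 {f : (Fin 3 → ℝ) → ℝ} (hf : ContDiff ℝ (⊤ : ℕ∞) f) (i : Fin 3) :
    ContDiff ℝ (⊤ : ℕ∞) (pd3 f i) :=
  (hf.fderiv_right (by simp)).clm_apply contDiff_const

lemma fderiv_periodic {f : (Fin 3 → ℝ) → ℝ} (hf : Differentiable ℝ f)
    (c : Fin 3 → ℝ) (hp : ∀ x, f (x + c) = f x) (x : Fin 3 → ℝ) :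
    fderiv ℝ f (x + c) = fderiv ℝ f x := by
  have h1 : HasFDerivAt (fun y => f (y + c))
      ((fderiv ℝ f (x + c)).comp (ContinuousLinearMap.id ℝ (Fin 3 → ℝ))) x :=
    (hf (x + c)).hasFDerivAt.comp x ((hasFDerivAt_id x).add_const c)
  have h2 : (fun y => f (y + c)) = f := funext hp
  rw [h2] at h1
  rw [h1.fderiv, ContinuousLinearMap.comp_id]

lemma hasFDerivAt_div3 {x : Fin 3 → ℝ} {f g : (Fin 3 → ℝ) → ℝ}
    {f' g' : (Fin 3 → ℝ) →L[ℝ] ℝ} (hf : HasFDerivAt f f' x) (hg : HasFDerivAt g g' x)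
    (h0 : g x ≠ 0) :
    HasFDerivAt (fun y => f y / g y) ((g x)⁻¹ • f' + (-(f x) / g x ^ 2) • g') x := by
  have hi : HasFDerivAt (fun y => (g y)⁻¹) ((-(g x ^ 2)⁻¹) • g') x := by
    have h := (hasDerivAt_inv h0).comp_hasFDerivAt x hg
    have h2 : ((fun y => y⁻¹) ∘ g) = fun y => (g y)⁻¹ := rfl
    rw [h2] at h
    convert h using 1
  have h := hf.mul hi
  simp only [div_eq_mul_inv]
  refine h.congr_fderiv ?_
  ext v
  simp [ContinuousLinearMap.add_apply, ContinuousLinearMap.smul_apply, smul_eq_mul]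
  field_simp
  ring

lemma insertNth_one_eq (i : Fin 3) (y : Fin 2 → ℝ) :
    (Fin.insertNth i (1:ℝ) y : Fin 3 → ℝ)
      = (Fin.insertNth i 0 y : Fin 3 → ℝ) + Pi.single i 1 := by
  funext j
  refine Fin.succAboveCases i ?_ ?_ j
  · simp
  · intro k
    simp [Fin.insertNth_apply_succAbove, Pi.single_eq_of_ne (Fin.succAbove_ne i k)]

lemma scalar1 {s u v : ℝ} (hs : s ≠ 0) :
    ((s/2)*u + v/(4*s^3))^2 ≤ s^2/2*u^2 + v^2/(8*s^6) := by
  have key : s^2/2*u^2 + v^2/(8*s^6) - ((s/2)*u + v/(4*s^3))^2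
      = ((s/2)*u - v/(4*s^3))^2 := by
    field_simp
    ring
  nlinarith [sq_nonneg ((s/2)*u - v/(4*s^3)), key]

noncomputable def NN (ϱ : (Fin 3 → ℝ) → ℝ) (y : Fin 3 → ℝ) : ℝ :=
  ∑ k, pd3 ϱ k y * pd3 ϱ k y

noncomputable def ell (ϱ : (Fin 3 → ℝ) → ℝ) (x : Fin 3 → ℝ) (i j : Fin 3) : ℝ :=
  hess3 (fun y => Real.log (ϱ y)) x i j

noncomputable def DL (ϱ : (Fin 3 → ℝ) → ℝ) (x : Fin 3 → ℝ) : ℝ :=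
  2 * (∑ i, ∑ j, ell ϱ x i j * (pd3 ϱ i x * pd3 ϱ j x)) / ϱ x
    + NN ϱ x * (∑ i, ell ϱ x i i) / ϱ x + (NN ϱ x) ^ 2 / (ϱ x) ^ 3

noncomputable def Nd (ϱ : (Fin 3 → ℝ) → ℝ) (x : Fin 3 → ℝ) : (Fin 3 → ℝ) →L[ℝ] ℝ :=
  ∑ k, (pd3 ϱ k x • fderiv ℝ (pd3 ϱ k) x + pd3 ϱ k x • fderiv ℝ (pd3 ϱ k) x)

noncomputable def WW (ϱ : (Fin 3 → ℝ) → ℝ) (y : Fin 3 → ℝ) (i : Fin 3) : ℝ :=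
  NN ϱ y * pd3 ϱ i y / (ϱ y * ϱ y)

noncomputable def Wd (ϱ : (Fin 3 → ℝ) → ℝ) (x : Fin 3 → ℝ) (i : Fin 3) :
    (Fin 3 → ℝ) →L[ℝ] ℝ :=
  (ϱ x * ϱ x)⁻¹ • (NN ϱ x • fderiv ℝ (pd3 ϱ i) x + pd3 ϱ i x • Nd ϱ x)
    + (-(NN ϱ x * pd3 ϱ i x) / (ϱ x * ϱ x) ^ 2) • (ϱ x • fderiv ℝ ϱ x + ϱ x • fderiv ℝ ϱ x)

section
variable {ϱ : (Fin 3 → ℝ) → ℝ} (hsm : ContDiff ℝ (⊤ : ℕ∞) ϱ) (hpos : ∀ x, 0 < ϱ x)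

include hsm hpos

lemma grad_log (x : Fin 3 → ℝ) (i : Fin 3) :
    fderiv ℝ (fun y => Real.log (ϱ y)) x (Pi.single i 1) = pd3 ϱ i x / ϱ x := by
  have hd : HasFDerivAt ϱ (fderiv ℝ ϱ x) x :=
    (hsm.differentiable (by simp) x).hasFDerivAt
  have h := hd.log (ne_of_gt (hpos x))
  rw [h.fderiv]
  simp [pd3, smul_eq_mul]
  ring

lemma hess_log (x : Fin 3 → ℝ) (i j : Fin 3) :
    hess3 (fun y => Real.log (ϱ y)) x i j
      = hess3 ϱ x i j / ϱ x - pd3 ϱ i x * pd3 ϱ j x / (ϱ x) ^ 2 := by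
  have hrw : (fun y => fderiv ℝ (fun z => Real.log (ϱ z)) y (Pi.single i 1))
      = fun y => pd3 ϱ i y / ϱ y := funext fun y => grad_log hsm hpos y i
  rw [hess3, hrw]
  have hB : HasFDerivAt (pd3 ϱ i) (fderiv ℝ (pd3 ϱ i) x) x :=
    (((contDiff_pd3 hsm i).differentiable (by simp)) x).hasFDerivAt
  have hd : HasFDerivAt ϱ (fderiv ℝ ϱ x) x :=
    (hsm.differentiable (by simp) x).hasFDerivAt
  have h := hasFDerivAt_div3 hB hd (ne_of_gt (hpos x))
  rw [h.fderiv]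
  have hh : fderiv ℝ (pd3 ϱ i) x (Pi.single j 1) = hess3 ϱ x i j := rfl
  simp [ContinuousLinearMap.add_apply, ContinuousLinearMap.smul_apply, smul_eq_mul, hh]
  have h0 : ϱ x ≠ 0 := ne_of_gt (hpos x)
  simp only [pd3]
  field_simp [pd3]
  ring

lemma grad_sqrt (x : Fin 3 → ℝ) (i : Fin 3) :
    fderiv ℝ (fun y => Real.sqrt (ϱ y)) x (Pi.single i 1)
      = pd3 ϱ i x / (2 * Real.sqrt (ϱ x)) := by
  have hd : HasFDerivAt ϱ (fderiv ℝ ϱ x) x :=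
    (hsm.differentiable (by simp) x).hasFDerivAt
  have h := hd.sqrt (ne_of_gt (hpos x))
  rw [h.fderiv]
  simp [pd3, smul_eq_mul]
  ring

lemma hess_sqrt (x : Fin 3 → ℝ) (i j : Fin 3) :
    hess3 (fun y => Real.sqrt (ϱ y)) x i j
      = hess3 ϱ x i j / (2 * Real.sqrt (ϱ x))
        - pd3 ϱ i x * pd3 ϱ j x / (4 * ϱ x * Real.sqrt (ϱ x)) := by
  have hrw : (fun y => fderiv ℝ (fun z => Real.sqrt (ϱ z)) y (Pi.single i 1))
      = fun y => pd3 ϱ i y / (2 * Real.sqrt (ϱ y)) := funext fun y => grad_sqrt hsm hpos y i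
  rw [hess3, hrw]
  have hB : HasFDerivAt (pd3 ϱ i) (fderiv ℝ (pd3 ϱ i) x) x :=
    (((contDiff_pd3 hsm i).differentiable (by simp)) x).hasFDerivAt
  have hd : HasFDerivAt ϱ (fderiv ℝ ϱ x) x :=
    (hsm.differentiable (by simp) x).hasFDerivAt
  have hsq : HasFDerivAt (fun y => Real.sqrt (ϱ y))
      ((1 / (2 * Real.sqrt (ϱ x))) • fderiv ℝ ϱ x) x := hd.sqrt (ne_of_gt (hpos x))
  have hden : HasFDerivAt (fun y => 2 * Real.sqrt (ϱ y))
      ((2 : ℝ) • ((1 / (2 * Real.sqrt (ϱ x))) • fderiv ℝ ϱ x)) x := hsq.const_mul 2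
  have hs0 : Real.sqrt (ϱ x) ≠ 0 := ne_of_gt (Real.sqrt_pos.2 (hpos x))
  have h := hasFDerivAt_div3 hB hden (by positivity)
  rw [h.fderiv]
  have hA : fderiv ℝ (pd3 ϱ i) x (Pi.single j 1) = hess3 ϱ x i j := rfl
  simp [ContinuousLinearMap.add_apply, ContinuousLinearMap.smul_apply, smul_eq_mul, hA]
  have h0 : ϱ x ≠ 0 := ne_of_gt (hpos x)
  have hss : Real.sqrt (ϱ x) * Real.sqrt (ϱ x) = ϱ x :=
    Real.mul_self_sqrt (le_of_lt (hpos x))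
  rw [← hss]
  simp only [pd3, Real.sqrt_mul_self (Real.sqrt_nonneg _)]
  field_simp [pd3]
  ring

lemma hA2 (x : Fin 3 → ℝ) (i j : Fin 3) :
    fderiv ℝ (pd3 ϱ i) x (Pi.single j 1)
      = ϱ x * ell ϱ x i j + pd3 ϱ i x * pd3 ϱ j x / ϱ x := by
  have h0 : ϱ x ≠ 0 := (hpos x).ne'
  have h : ell ϱ x i j = fderiv ℝ (pd3 ϱ i) x (Pi.single j 1) / ϱ x
      - pd3 ϱ i x * pd3 ϱ j x / (ϱ x) ^ 2 := hess_log hsm hpos x i j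
  rw [h]
  field_simp
  ring

lemma div_eval (x : Fin 3 → ℝ) :
    (∑ i, Wd ϱ x i (Pi.single i 1)) = DL ϱ x := by
  have h0 : ϱ x ≠ 0 := (hpos x).ne'
  simp only [Wd, Nd, ContinuousLinearMap.add_apply, ContinuousLinearMap.smul_apply,
    ContinuousLinearMap.sum_apply, smul_eq_mul, hA2 hsm hpos,
    show ∀ j : Fin 3, fderiv ℝ ϱ x (Pi.single j 1) = pd3 ϱ j x from fun _ => rfl]
  simp only [DL, NN, Fin.sum_univ_three]
  field_simp
  ring

lemma hasFDerivAt_NN (x : Fin 3 → ℝ) : HasFDerivAt (NN ϱ) (Nd ϱ x) x := by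
  have hB : ∀ k : Fin 3, HasFDerivAt (pd3 ϱ k) (fderiv ℝ (pd3 ϱ k) x) x := fun k =>
    (((contDiff_pd3 hsm k).differentiable (by simp)) x).hasFDerivAt
  exact HasFDerivAt.fun_sum fun k _ => (hB k).mul (hB k)

lemma hasFDerivAt_WW (x : Fin 3 → ℝ) (i : Fin 3) :
    HasFDerivAt (fun y => WW ϱ y i) (Wd ϱ x i) x := by
  have hB : HasFDerivAt (pd3 ϱ i) (fderiv ℝ (pd3 ϱ i) x) x :=
    (((contDiff_pd3 hsm i).differentiable (by simp)) x).hasFDerivAt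
  have hd : HasFDerivAt ϱ (fderiv ℝ ϱ x) x := (hsm.differentiable (by simp) x).hasFDerivAt
  have h0 : ϱ x * ϱ x ≠ 0 := by have := hpos x; positivity
  exact hasFDerivAt_div3 ((hasFDerivAt_NN hsm hpos x).mul hB) (hd.mul hd) h0

lemma hasFDerivAt_WWpi (x : Fin 3 → ℝ) :
    HasFDerivAt (WW ϱ) (ContinuousLinearMap.pi (fun i => Wd ϱ x i)) x := by
  apply hasFDerivAt_pi''
  intro i
  rw [ContinuousLinearMap.proj_pi]
  exact hasFDerivAt_WW hsm hpos x i

lemma cont_pd (i : Fin 3) : Continuous (pd3 ϱ i) := (contDiff_pd3 hsm i).continuous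

lemma cont_hess (i j : Fin 3) : Continuous (fun x => hess3 ϱ x i j) := by
  have h : Continuous (pd3 (pd3 ϱ i) j) := (contDiff_pd3 (contDiff_pd3 hsm i) j).continuous
  exact h

lemma cont_ell (i j : Fin 3) : Continuous (fun x => ell ϱ x i j) := by
  have h : (fun x => ell ϱ x i j)
      = fun x => hess3 ϱ x i j / ϱ x - pd3 ϱ i x * pd3 ϱ j x / (ϱ x) ^ 2 :=
    funext fun x => hess_log hsm hpos x i j
  rw [h]
  have h1 := cont_hess hsm hpos i j
  have h2 := cont_pd hsm hpos (ϱ := ϱ) i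
  have h3 := cont_pd hsm hpos (ϱ := ϱ) j
  exact (h1.div hsm.continuous fun x => (hpos x).ne').sub
    ((h2.mul h3).div (hsm.continuous.pow 2) fun x => by have := hpos x; positivity)

lemma cont_NN : Continuous (NN ϱ) :=
  continuous_finset_sum _ fun k _ => (cont_pd hsm hpos k).mul (cont_pd hsm hpos k)

lemma cont_DL : Continuous (DL ϱ) := by
  have h1 : Continuous fun x => ∑ i, ∑ j, ell ϱ x i j * (pd3 ϱ i x * pd3 ϱ j x) :=
    continuous_finset_sum _ fun i _ => continuous_finset_sum _ fun j _ =>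
      (cont_ell hsm hpos i j).mul ((cont_pd hsm hpos i).mul (cont_pd hsm hpos j))
  have h2 : Continuous fun x => ∑ i, ell ϱ x i i :=
    continuous_finset_sum _ fun i _ => cont_ell hsm hpos i i
  refine Continuous.add (Continuous.add ?_ ?_) ?_
  · exact (continuous_const.mul h1).div hsm.continuous fun x => (hpos x).ne'
  · exact ((cont_NN hsm hpos).mul h2).div hsm.continuous fun x => (hpos x).ne'
  · exact ((cont_NN hsm hpos).pow 2).div (hsm.continuous.pow 3)
      fun x => by have := hpos x; positivity

end

end JungelAux

open JungelAux in
/-- Jüngel's inequality: for a smooth strictly positive periodic function `ϱ` on the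
torus `𝕋³`, `∫ ϱ |∇² log ϱ|² ≥ (1/7) ∫ |∇² √ϱ|²`. -/
theorem stmt8 (ϱ : (Fin 3 → ℝ) → ℝ) (hsm : ContDiff ℝ (⊤ : ℕ∞) ϱ)
    (hpos : ∀ x, 0 < ϱ x)
    (hper : ∀ (x : Fin 3 → ℝ) (i : Fin 3), ϱ (x + Pi.single i 1) = ϱ x) :
    (1/7) * ∫ x in Set.univ.pi fun _ : Fin 3 => Set.Icc (0:ℝ) 1,
        ∑ i, ∑ j, (hess3 (fun y => Real.sqrt (ϱ y)) x i j)^2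
      ≤ ∫ x in Set.univ.pi fun _ : Fin 3 => Set.Icc (0:ℝ) 1,
        ϱ x * ∑ i, ∑ j, (hess3 (fun y => Real.log (ϱ y)) x i j)^2 := by
  have hset : (Set.univ.pi fun _ : Fin 3 => Set.Icc (0:ℝ) 1) = Set.Icc (0 : Fin 3 → ℝ) 1 := by
    rw [← Set.pi_univ_Icc]; rfl
  rw [hset]
  show (1/7) * ∫ x in Set.Icc (0 : Fin 3 → ℝ) 1,
        ∑ i, ∑ j, (hess3 (fun y => Real.sqrt (ϱ y)) x i j)^2
      ≤ ∫ x in Set.Icc (0 : Fin 3 → ℝ) 1, ϱ x * ∑ i, ∑ j, (ell ϱ x i j)^2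
  -- continuity facts
  have cont_S : ∀ i j : Fin 3, Continuous (fun x => hess3 (fun y => Real.sqrt (ϱ y)) x i j) := by
    intro i j
    have h : (fun x => hess3 (fun y => Real.sqrt (ϱ y)) x i j)
        = fun x => hess3 ϱ x i j / (2 * Real.sqrt (ϱ x))
            - pd3 ϱ i x * pd3 ϱ j x / (4 * ϱ x * Real.sqrt (ϱ x)) :=
      funext fun x => hess_sqrt hsm hpos x i j
    rw [h]
    have hsc : Continuous fun x => Real.sqrt (ϱ x) := Real.continuous_sqrt.comp hsm.continuous
    refine Continuous.sub ?_ ?_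
    · exact (cont_hess hsm hpos i j).div (continuous_const.mul hsc)
        fun x => by have := Real.sqrt_pos.2 (hpos x); positivity
    · exact ((cont_pd hsm hpos i).mul (cont_pd hsm hpos j)).div
        ((continuous_const.mul hsm.continuous).mul hsc)
        fun x => by have := Real.sqrt_pos.2 (hpos x); have := hpos x; positivity
  have cont_fS : Continuous (fun x => ∑ i, ∑ j, (hess3 (fun y => Real.sqrt (ϱ y)) x i j)^2) :=
    continuous_finset_sum _ fun i _ => continuous_finset_sum _ fun j _ => (cont_S i j).pow 2
  have cont_fI : Continuous (fun x => ϱ x * ∑ i, ∑ j, (ell ϱ x i j)^2) :=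
    hsm.continuous.mul (continuous_finset_sum _ fun i _ =>
      continuous_finset_sum _ fun j _ => (cont_ell hsm hpos i j).pow 2)
  have cont_fQ : Continuous (fun x => (NN ϱ x)^2 / (ϱ x)^3) :=
    ((cont_NN hsm hpos).pow 2).div (hsm.continuous.pow 3)
      fun x => by have := hpos x; positivity
  have intfS : IntegrableOn (fun x => ∑ i, ∑ j, (hess3 (fun y => Real.sqrt (ϱ y)) x i j)^2)
      (Set.Icc (0 : Fin 3 → ℝ) 1) volume := cont_fS.integrableOn_Icc
  have intfI : IntegrableOn (fun x => ϱ x * ∑ i, ∑ j, (ell ϱ x i j)^2)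
      (Set.Icc (0 : Fin 3 → ℝ) 1) volume := cont_fI.integrableOn_Icc
  have intfQ : IntegrableOn (fun x => (NN ϱ x)^2 / (ϱ x)^3)
      (Set.Icc (0 : Fin 3 → ℝ) 1) volume := cont_fQ.integrableOn_Icc
  have intDL : IntegrableOn (DL ϱ) (Set.Icc (0 : Fin 3 → ℝ) 1) volume :=
    (cont_DL hsm hpos).integrableOn_Icc
  -- the divergence theorem
  have cont_WW : Continuous (WW ϱ) := by
    refine continuous_pi fun i => ?_
    exact ((cont_NN hsm hpos).mul (cont_pd hsm hpos i)).div
      (hsm.continuous.mul hsm.continuous) fun x => by have := hpos x; positivity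
  have hfun : (fun x => ∑ i, (ContinuousLinearMap.pi fun j => Wd ϱ x j) (Pi.single i 1) i)
      = DL ϱ := by
    funext x
    simp only [ContinuousLinearMap.pi_apply]
    exact div_eval hsm hpos x
  have hdiv := MeasureTheory.integral_divergence_of_hasFDerivAt_off_countable
    (n := 2) 0 1 (by intro i; norm_num) (WW ϱ)
    (fun x => ContinuousLinearMap.pi fun i => Wd ϱ x i) ∅ Set.countable_empty
    cont_WW.continuousOn (fun x _ => hasFDerivAt_WWpi hsm hpos x)
    (by rw [hfun]; exact intDL)
  rw [hfun] at hdiv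
  have hfaces : ∀ i : Fin 3,
      ((∫ y in Set.Icc ((0 : Fin 3 → ℝ) ∘ i.succAbove) ((1 : Fin 3 → ℝ) ∘ i.succAbove),
          WW ϱ (i.insertNth ((1 : Fin 3 → ℝ) i) y) i)
        - ∫ y in Set.Icc ((0 : Fin 3 → ℝ) ∘ i.succAbove) ((1 : Fin 3 → ℝ) ∘ i.succAbove),
          WW ϱ (i.insertNth ((0 : Fin 3 → ℝ) i) y) i) = 0 := by
    intro i
    have hper_pd : ∀ (k : Fin 3) (z : Fin 3 → ℝ),
        pd3 ϱ k (z + Pi.single i 1) = pd3 ϱ k z := by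
      intro k z
      unfold pd3
      rw [fderiv_periodic (hsm.differentiable (by simp)) _ (fun w => hper w i) z]
    have hWper : ∀ z : Fin 3 → ℝ, WW ϱ (z + Pi.single i 1) i = WW ϱ z i := by
      intro z
      simp only [WW, NN, hper_pd, hper]
    rw [sub_eq_zero]
    congr 1
    funext y
    have h1 : ((1 : Fin 3 → ℝ) i) = (1 : ℝ) := rfl
    have h0 : ((0 : Fin 3 → ℝ) i) = (0 : ℝ) := rfl
    rw [h1, h0, insertNth_one_eq, hWper]
  have hDL0 : (∫ x in Set.Icc (0 : Fin 3 → ℝ) 1, DL ϱ x) = 0 := by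
    rw [hdiv]
    exact Finset.sum_eq_zero fun i _ => hfaces i
  -- pointwise bounds
  have ptA : ∀ x, (∑ i, ∑ j, (hess3 (fun y => Real.sqrt (ϱ y)) x i j)^2)
      ≤ 1/2 * (ϱ x * ∑ i, ∑ j, (ell ϱ x i j)^2) + 1/8 * ((NN ϱ x)^2 / (ϱ x)^3) := by
    intro x
    set s : ℝ := Real.sqrt (ϱ x) with hsdef
    have hs0 : s ≠ 0 := ne_of_gt (Real.sqrt_pos.2 (hpos x))
    have hsq : s ^ 2 = ϱ x := Real.sq_sqrt (hpos x).le
    have hSL : ∀ i j : Fin 3, hess3 (fun y => Real.sqrt (ϱ y)) x i j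
        = (s/2) * ell ϱ x i j
          + pd3 ϱ i x * pd3 ϱ j x / (4 * s ^ 3) := by
      intro i j
      rw [hess_sqrt hsm hpos x i j]
      have hAe : hess3 ϱ x i j = ϱ x * ell ϱ x i j + pd3 ϱ i x * pd3 ϱ j x / ϱ x :=
        hA2 hsm hpos x i j
      rw [hAe, ← hsq]
      simp only [Real.sqrt_sq (show (0:ℝ) ≤ s from Real.sqrt_nonneg _)]
      field_simp
      ring
    calc (∑ i, ∑ j, (hess3 (fun y => Real.sqrt (ϱ y)) x i j)^2)
        = ∑ i, ∑ j, ((s/2) * ell ϱ x i j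
            + pd3 ϱ i x * pd3 ϱ j x / (4 * s ^ 3))^2 := by
          simp only [hSL]
      _ ≤ ∑ i, ∑ j, (s^2/2 * (ell ϱ x i j)^2
            + (pd3 ϱ i x * pd3 ϱ j x)^2 / (8 * s^6)) :=
          Finset.sum_le_sum fun i _ => Finset.sum_le_sum fun j _ => scalar1 hs0
      _ = 1/2 * (ϱ x * ∑ i, ∑ j, (ell ϱ x i j)^2) + 1/8 * ((NN ϱ x)^2 / (ϱ x)^3) := by
          rw [← hsq]
          simp only [NN, Fin.sum_univ_three]
          field_simp
          ring
  have ptB : ∀ x, (NN ϱ x)^2 / (ϱ x)^3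
      ≤ 2 * DL ϱ x + 15 * (ϱ x * ∑ i, ∑ j, (ell ϱ x i j)^2) := by
    intro x
    have hr : (0:ℝ) < ϱ x := hpos x
    have hd1 : (0:ℝ) ≤ ∑ i, ∑ j, (5*(ϱ x)^2 * ell ϱ x i j + pd3 ϱ i x * pd3 ϱ j x)^2 := by
      positivity
    have hd2 : (0:ℝ) ≤ ∑ i, (5*(ϱ x)^2 * ell ϱ x i i + NN ϱ x)^2 := by positivity
    have hT3 : (∑ i, (ell ϱ x i i)^2) ≤ ∑ i, ∑ j, (ell ϱ x i j)^2 :=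
      Finset.sum_le_sum fun i _ =>
        Finset.single_le_sum (f := fun j => (ell ϱ x i j)^2) (fun j _ => sq_nonneg _)
          (Finset.mem_univ i)
    have hkey : 2 * DL ϱ x + 15 * (ϱ x * ∑ i, ∑ j, (ell ϱ x i j)^2) - (NN ϱ x)^2/(ϱ x)^3
        = (2*(∑ i, ∑ j, (5*(ϱ x)^2 * ell ϱ x i j + pd3 ϱ i x * pd3 ϱ j x)^2)
            + (∑ i, (5*(ϱ x)^2 * ell ϱ x i i + NN ϱ x)^2)
            + 25*(ϱ x)^4*((∑ i, ∑ j, (ell ϱ x i j)^2) - (∑ i, (ell ϱ x i i)^2)))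
          / (5*(ϱ x)^3) := by
      simp only [DL, NN, Fin.sum_univ_three]
      field_simp
      ring
    have hnum : (0:ℝ) ≤ 2*(∑ i, ∑ j, (5*(ϱ x)^2 * ell ϱ x i j + pd3 ϱ i x * pd3 ϱ j x)^2)
        + (∑ i, (5*(ϱ x)^2 * ell ϱ x i i + NN ϱ x)^2)
        + 25*(ϱ x)^4*((∑ i, ∑ j, (ell ϱ x i j)^2) - (∑ i, (ell ϱ x i i)^2)) := by
      have h3 : (0:ℝ) ≤ 25*(ϱ x)^4*((∑ i, ∑ j, (ell ϱ x i j)^2) - (∑ i, (ell ϱ x i i)^2)) :=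
        mul_nonneg (by positivity) (sub_nonneg.2 hT3)
      linarith
    have hpos' : (0:ℝ) ≤ (2*(∑ i, ∑ j, (5*(ϱ x)^2 * ell ϱ x i j + pd3 ϱ i x * pd3 ϱ j x)^2)
            + (∑ i, (5*(ϱ x)^2 * ell ϱ x i i + NN ϱ x)^2)
            + 25*(ϱ x)^4*((∑ i, ∑ j, (ell ϱ x i j)^2) - (∑ i, (ell ϱ x i i)^2)))
          / (5*(ϱ x)^3) := div_nonneg hnum (by positivity)
    linarith [hkey, hpos']
  -- integral inequalities
  have hIneq1 : (∫ x in Set.Icc (0 : Fin 3 → ℝ) 1,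
        ∑ i, ∑ j, (hess3 (fun y => Real.sqrt (ϱ y)) x i j)^2)
      ≤ ∫ x in Set.Icc (0 : Fin 3 → ℝ) 1,
        (1/2 * (ϱ x * ∑ i, ∑ j, (ell ϱ x i j)^2) + 1/8 * ((NN ϱ x)^2 / (ϱ x)^3)) :=
    setIntegral_mono_on intfS ((intfI.const_mul _).add (intfQ.const_mul _))
      measurableSet_Icc fun x _ => ptA x
  have heq1 : (∫ x in Set.Icc (0 : Fin 3 → ℝ) 1,
        (1/2 * (ϱ x * ∑ i, ∑ j, (ell ϱ x i j)^2) + 1/8 * ((NN ϱ x)^2 / (ϱ x)^3)))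
      = 1/2 * (∫ x in Set.Icc (0 : Fin 3 → ℝ) 1, ϱ x * ∑ i, ∑ j, (ell ϱ x i j)^2)
        + 1/8 * (∫ x in Set.Icc (0 : Fin 3 → ℝ) 1, (NN ϱ x)^2 / (ϱ x)^3) := by
    rw [integral_add (intfI.const_mul _) (intfQ.const_mul _), integral_const_mul,
      integral_const_mul]
  have hIneq2 : (∫ x in Set.Icc (0 : Fin 3 → ℝ) 1, (NN ϱ x)^2 / (ϱ x)^3)
      ≤ ∫ x in Set.Icc (0 : Fin 3 → ℝ) 1,
        (2 * DL ϱ x + 15 * (ϱ x * ∑ i, ∑ j, (ell ϱ x i j)^2)) :=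
    setIntegral_mono_on intfQ ((intDL.const_mul _).add (intfI.const_mul _))
      measurableSet_Icc fun x _ => ptB x
  have heq2 : (∫ x in Set.Icc (0 : Fin 3 → ℝ) 1,
        (2 * DL ϱ x + 15 * (ϱ x * ∑ i, ∑ j, (ell ϱ x i j)^2)))
      = 2 * (∫ x in Set.Icc (0 : Fin 3 → ℝ) 1, DL ϱ x)
        + 15 * (∫ x in Set.Icc (0 : Fin 3 → ℝ) 1, ϱ x * ∑ i, ∑ j, (ell ϱ x i j)^2) := by
    rw [integral_add (intDL.const_mul _) (intfI.const_mul _), integral_const_mul,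
      integral_const_mul]
  have hInn : (0:ℝ) ≤ ∫ x in Set.Icc (0 : Fin 3 → ℝ) 1, ϱ x * ∑ i, ∑ j, (ell ϱ x i j)^2 :=
    setIntegral_nonneg measurableSet_Icc fun x _ =>
      mul_nonneg (hpos x).le (Finset.sum_nonneg fun i _ => Finset.sum_nonneg fun j _ =>
        sq_nonneg _)
  rw [heq1] at hIneq1
  rw [heq2, hDL0] at hIneq2
  linarith
end

section
/- For a smooth strictly positive function ϱ on the torus 𝕋³, one has ∫ ϱ |∇² log ϱ|² dx ≥ (1/8) ∫ |∇ϱ^{1/4}|⁴ dx. -/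
open MeasureTheory

/-! ### Auxiliary definitions and lemmas -/

noncomputable def pd (f : (Fin 3 → ℝ) → ℝ) (i : Fin 3) (x : Fin 3 → ℝ) : ℝ :=
  fderiv ℝ f x (Pi.single i 1)

lemma contDiff_pd {f : (Fin 3 → ℝ) → ℝ} (hf : ContDiff ℝ (⊤ : ℕ∞) f) (i : Fin 3) :
    ContDiff ℝ (⊤ : ℕ∞) (pd f i) := by
  have h := (ContinuousLinearMap.apply ℝ ℝ (Pi.single i (1:ℝ) : Fin 3 → ℝ)).contDiff.comp
    (hf.fderiv_right (m := (⊤ : ℕ∞)) (by simp))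
  exact h

lemma fderiv_shift {f : (Fin 3 → ℝ) → ℝ} (hf : Differentiable ℝ f)
    (c : Fin 3 → ℝ) (hp : ∀ x, f (x + c) = f x) (x : Fin 3 → ℝ) :
    fderiv ℝ f (x + c) = fderiv ℝ f x := by
  have htr : HasFDerivAt (fun y : Fin 3 → ℝ => y + c) (ContinuousLinearMap.id ℝ _) x :=
    (hasFDerivAt_id x).add_const c
  have h1 := (hf (x + c)).hasFDerivAt.comp x htr
  rw [Function.comp_def] at h1
  have h2 : (fun y => f (y + c)) = f := funext hp
  rw [h2, ContinuousLinearMap.comp_id] at h1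
  exact h1.fderiv.symm

lemma pointwise_bound {r S D P T : ℝ} (hr : 0 ≤ r) (hS : 0 ≤ S) (hT : 0 ≤ T)
    (hD : D^2 ≤ 3*T) (hP : P^2 ≤ S^2*T) :
    -(r * (S * D + 2 * P)) ≤ 1/2 * (r * S^2) + 8 * (r * T) := by
  set t := Real.sqrt T with ht
  have ht0 : 0 ≤ t := Real.sqrt_nonneg T
  have ht2 : t^2 = T := Real.sq_sqrt hT
  have habsD : |D| ≤ 2*t := by
    have h1 : D^2 ≤ (2*t)^2 := by nlinarith
    have h2 := Real.sqrt_le_sqrt h1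
    rwa [Real.sqrt_sq_eq_abs, Real.sqrt_sq (by positivity)] at h2
  have habsP : |P| ≤ S*t := by
    have h1 : P^2 ≤ (S*t)^2 := by nlinarith
    have h2 := Real.sqrt_le_sqrt h1
    rwa [Real.sqrt_sq_eq_abs, Real.sqrt_sq (by positivity)] at h2
  have key : -(S * D + 2*P) ≤ 1/2 * S^2 + 8*T := by
    have e1 : S * (-D) ≤ S * (2*t) :=
      mul_le_mul_of_nonneg_left (by linarith [(abs_le.mp habsD).1]) hS
    have e2 : -P ≤ S*t := by linarith [(abs_le.mp habsP).1]
    nlinarith [sq_nonneg (S - 4*t)]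
  have h4 := mul_le_mul_of_nonneg_left key hr
  nlinarith [h4]

lemma cs_diag (h : Fin 3 → Fin 3 → ℝ) :
    (∑ j, h j j)^2 ≤ 3 * ∑ i, ∑ j, (h i j)^2 := by
  have h1 := Finset.sum_mul_sq_le_sq_mul_sq Finset.univ (fun _ : Fin 3 => (1:ℝ))
    (fun j => h j j)
  simp only [one_mul, one_pow] at h1
  have h2 : ∑ j : Fin 3, (h j j)^2 ≤ ∑ i, ∑ j, (h i j)^2 :=
    Finset.sum_le_sum fun i _ =>
      Finset.single_le_sum (f := fun j => (h i j)^2) (fun j _ => sq_nonneg _)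
        (Finset.mem_univ i)
  have h3 : (∑ _j : Fin 3, (1:ℝ)) = 3 := by simp
  rw [h3] at h1
  nlinarith [h1, h2]

lemma cs_cross (v : Fin 3 → ℝ) (h : Fin 3 → Fin 3 → ℝ) :
    (∑ j, ∑ k, v j * v k * h k j)^2 ≤ (∑ k, v k * v k)^2 * ∑ i, ∑ j, (h i j)^2 := by
  have h1 := Finset.sum_mul_sq_le_sq_mul_sq (Finset.univ : Finset (Fin 3 × Fin 3))
    (fun p => v p.1 * v p.2) (fun p => h p.2 p.1)
  rw [Fintype.sum_prod_type, Fintype.sum_prod_type, Fintype.sum_prod_type] at h1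
  have h2 : (∑ j : Fin 3, ∑ k : Fin 3, (v j * v k)^2) = (∑ k, v k * v k)^2 := by
    simp_rw [mul_pow]
    rw [← Finset.sum_mul_sum]
    simp [sq, pow_two]
  have h3 : (∑ j : Fin 3, ∑ k : Fin 3, (h k j)^2) = ∑ i, ∑ j, (h i j)^2 :=
    Finset.sum_comm
  rw [h2, h3] at h1
  exact h1

lemma insertNth_one_eq (i : Fin 3) (y : Fin 2 → ℝ) :
    (Fin.insertNth i (1:ℝ) y : Fin 3 → ℝ)
      = ((Fin.insertNth i (0:ℝ) y : Fin 3 → ℝ) + Pi.single i 1 : Fin 3 → ℝ) := by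
  funext j
  refine Fin.succAboveCases i ?_ ?_ j
  · simp
  · intro k
    simp [Fin.insertNth_apply_succAbove, Pi.single_eq_of_ne (Fin.succAbove_ne i k)]

lemma divzero (F : (Fin 3 → ℝ) → (Fin 3 → ℝ))
    (F' : (Fin 3 → ℝ) → ((Fin 3 → ℝ) →L[ℝ] (Fin 3 → ℝ)))
    (hc : Continuous F) (hd : ∀ x, HasFDerivAt F (F' x) x)
    (hi : IntegrableOn (fun x => ∑ i, F' x (Pi.single i 1) i) (Set.Icc 0 1))
    (hFper : ∀ (x : Fin 3 → ℝ) (i : Fin 3), F (x + Pi.single i 1) = F x) :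
    (∫ x in Set.Icc (0 : Fin 3 → ℝ) 1, ∑ i, F' x (Pi.single i 1) i) = 0 := by
  have hle : (0 : Fin 3 → ℝ) ≤ 1 := fun i => zero_le_one
  have h := MeasureTheory.integral_divergence_of_hasFDerivAt_off_countable
    (a := (0 : Fin 3 → ℝ)) (b := 1) hle F F' ∅ Set.countable_empty hc.continuousOn
    (fun x _ => hd x) hi
  rw [h]
  apply Finset.sum_eq_zero
  intro i _
  have heq : ∀ y : Fin 2 → ℝ,
      F (i.insertNth ((1 : Fin 3 → ℝ) i) y) i = F (i.insertNth ((0 : Fin 3 → ℝ) i) y) i := by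
    intro y
    have h1 : ((1 : Fin 3 → ℝ) i) = (1:ℝ) := rfl
    have h0 : ((0 : Fin 3 → ℝ) i) = (0:ℝ) := rfl
    rw [h1, h0, insertNth_one_eq i y, hFper]
  simp only [heq, sub_self]

noncomputable def uu (ϱ : (Fin 3 → ℝ) → ℝ) : (Fin 3 → ℝ) → ℝ := fun y => Real.log (ϱ y)
noncomputable def vv (ϱ : (Fin 3 → ℝ) → ℝ) (i : Fin 3) : (Fin 3 → ℝ) → ℝ := pd (uu ϱ) i
noncomputable def hh (ϱ : (Fin 3 → ℝ) → ℝ) (i j : Fin 3) : (Fin 3 → ℝ) → ℝ := pd (vv ϱ i) j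
noncomputable def SS (ϱ : (Fin 3 → ℝ) → ℝ) (x : Fin 3 → ℝ) : ℝ := ∑ k, vv ϱ k x * vv ϱ k x
noncomputable def DD (ϱ : (Fin 3 → ℝ) → ℝ) (x : Fin 3 → ℝ) : ℝ := ∑ j, hh ϱ j j x
noncomputable def PP (ϱ : (Fin 3 → ℝ) → ℝ) (x : Fin 3 → ℝ) : ℝ :=
  ∑ j, ∑ k, vv ϱ j x * vv ϱ k x * hh ϱ k j x
noncomputable def TT (ϱ : (Fin 3 → ℝ) → ℝ) (x : Fin 3 → ℝ) : ℝ := ∑ i, ∑ j, (hh ϱ i j x)^2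
noncomputable def FF (ϱ : (Fin 3 → ℝ) → ℝ) (x : Fin 3 → ℝ) (j : Fin 3) : ℝ :=
  ϱ x * (SS ϱ x * vv ϱ j x)
noncomputable def FF' (ϱ : (Fin 3 → ℝ) → ℝ) (x : Fin 3 → ℝ) :
    (Fin 3 → ℝ) →L[ℝ] (Fin 3 → ℝ) :=
  ContinuousLinearMap.pi fun j =>
    ϱ x • (SS ϱ x • fderiv ℝ (vv ϱ j) x + vv ϱ j x • fderiv ℝ (SS ϱ) x) +
      (SS ϱ x * vv ϱ j x) • (ϱ x • fderiv ℝ (uu ϱ) x)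

section
variable {ϱ : (Fin 3 → ℝ) → ℝ} (hsm : ContDiff ℝ (⊤ : ℕ∞) ϱ) (hpos : ∀ x, 0 < ϱ x)
include hsm hpos

lemma husm : ContDiff ℝ (⊤ : ℕ∞) (uu ϱ) := hsm.log fun x => (hpos x).ne'

lemma hvsm (i : Fin 3) : ContDiff ℝ (⊤ : ℕ∞) (vv ϱ i) := contDiff_pd (husm hsm hpos) i

lemma hhsm (i j : Fin 3) : ContDiff ℝ (⊤ : ℕ∞) (hh ϱ i j) := contDiff_pd (hvsm hsm hpos i) j

lemma hSsm : ContDiff ℝ (⊤ : ℕ∞) (SS ϱ) := by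
  have : ContDiff ℝ (⊤ : ℕ∞) fun x => ∑ k : Fin 3, vv ϱ k x * vv ϱ k x :=
    ContDiff.sum fun k _ => (hvsm hsm hpos k).mul (hvsm hsm hpos k)
  exact this

lemma hrho' (x : Fin 3 → ℝ) : HasFDerivAt ϱ (ϱ x • fderiv ℝ (uu ϱ) x) x := by
  have h1 : HasFDerivAt (uu ϱ) ((ϱ x)⁻¹ • fderiv ℝ ϱ x) x :=
    ((hsm.differentiable (by simp)) x).hasFDerivAt.log (hpos x).ne'
  have h2 : fderiv ℝ (uu ϱ) x = (ϱ x)⁻¹ • fderiv ℝ ϱ x := h1.fderiv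
  rw [h2, smul_smul, mul_inv_cancel₀ (hpos x).ne', one_smul]
  exact ((hsm.differentiable (by simp)) x).hasFDerivAt

lemma hS' (x : Fin 3 → ℝ) :
    HasFDerivAt (SS ϱ)
      (∑ k, (vv ϱ k x • fderiv ℝ (vv ϱ k) x + vv ϱ k x • fderiv ℝ (vv ϱ k) x)) x := by
  have h : ∀ k : Fin 3, HasFDerivAt (fun y => vv ϱ k y * vv ϱ k y)
      (vv ϱ k x • fderiv ℝ (vv ϱ k) x + vv ϱ k x • fderiv ℝ (vv ϱ k) x) x := fun k =>
    (((hvsm hsm hpos k).differentiable (by simp) x).hasFDerivAt).mul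
      (((hvsm hsm hpos k).differentiable (by simp) x).hasFDerivAt)
  exact HasFDerivAt.fun_sum fun k _ => h k

lemma hFF' (x : Fin 3 → ℝ) : HasFDerivAt (FF ϱ) (FF' ϱ x) x := by
  apply hasFDerivAt_pi''
  intro j
  have hj : HasFDerivAt (fun y => ϱ y * (SS ϱ y * vv ϱ j y))
      (ϱ x • (SS ϱ x • fderiv ℝ (vv ϱ j) x + vv ϱ j x • fderiv ℝ (SS ϱ) x) +
        (SS ϱ x * vv ϱ j x) • (ϱ x • fderiv ℝ (uu ϱ) x)) x := by
    exact (hrho' hsm hpos x).mul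
      ((((hSsm hsm hpos).differentiable (by simp) x).hasFDerivAt).mul
        (((hvsm hsm hpos j).differentiable (by simp) x).hasFDerivAt))
  have heq : ((ContinuousLinearMap.proj j).comp (FF' ϱ x) : (Fin 3 → ℝ) →L[ℝ] ℝ) =
      ϱ x • (SS ϱ x • fderiv ℝ (vv ϱ j) x + vv ϱ j x • fderiv ℝ (SS ϱ) x) +
        (SS ϱ x * vv ϱ j x) • (ϱ x • fderiv ℝ (uu ϱ) x) := by
    ext y
    simp [FF', ContinuousLinearMap.pi_apply]
  rw [heq]
  exact hj

lemma hdiv_eq (x : Fin 3 → ℝ) :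
    (∑ i, FF' ϱ x (Pi.single i 1) i)
      = ϱ x * (SS ϱ x)^2 + ϱ x * (SS ϱ x * DD ϱ x + 2 * PP ϱ x) := by
  have hSfd : ∀ j : Fin 3, fderiv ℝ (SS ϱ) x (Pi.single j 1)
      = ∑ k, (vv ϱ k x * hh ϱ k j x + vv ϱ k x * hh ϱ k j x) := by
    intro j
    rw [(hS' hsm hpos x).fderiv]
    simp only [ContinuousLinearMap.coe_sum', Finset.sum_apply, ContinuousLinearMap.add_apply,
      ContinuousLinearMap.coe_smul', Pi.smul_apply, smul_eq_mul]
    rfl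
  have hvfd : ∀ (k j : Fin 3), fderiv ℝ (vv ϱ k) x (Pi.single j 1) = hh ϱ k j x :=
    fun _ _ => rfl
  have hufd : ∀ (j : Fin 3), fderiv ℝ (uu ϱ) x (Pi.single j 1) = vv ϱ j x :=
    fun _ => rfl
  simp only [FF', ContinuousLinearMap.pi_apply, ContinuousLinearMap.add_apply,
    ContinuousLinearMap.coe_smul', Pi.smul_apply, smul_eq_mul, hSfd, hvfd, hufd]
  simp only [SS, DD, PP, Fin.sum_univ_three]
  ring

lemma hdi (x : Fin 3 → ℝ) (i : Fin 3) : fderiv ℝ ϱ x (Pi.single i 1) = ϱ x * vv ϱ i x := by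
  rw [(hrho' hsm hpos x).fderiv]
  simp only [ContinuousLinearMap.coe_smul', Pi.smul_apply, smul_eq_mul]
  rfl

lemma hlhs (x : Fin 3 → ℝ) :
    (∑ i, (fderiv ℝ (fun y => ϱ y ^ ((1:ℝ)/4)) x (Pi.single i 1))^2)^2
      = 1/256 * (ϱ x * (SS ϱ x)^2) := by
  have hfd : fderiv ℝ (fun y => ϱ y ^ ((1:ℝ)/4)) x
      = (((1:ℝ)/4) * ϱ x ^ ((1:ℝ)/4 - 1)) • fderiv ℝ ϱ x :=
    ((((hsm.differentiable (by simp)) x).hasFDerivAt).rpow_const (Or.inl (hpos x).ne')).fderiv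
  have key : ϱ x ^ ((1:ℝ)/4 - 1) * ϱ x = ϱ x ^ ((1:ℝ)/4) := by
    have h2 := (Real.rpow_add (hpos x) ((1:ℝ)/4 - 1) 1).symm
    rw [Real.rpow_one] at h2
    rw [h2]; norm_num
  have hfdi : ∀ i, fderiv ℝ (fun y => ϱ y ^ ((1:ℝ)/4)) x (Pi.single i 1)
      = 1/4 * ϱ x ^ ((1:ℝ)/4) * vv ϱ i x := by
    intro i
    rw [hfd]
    simp only [ContinuousLinearMap.coe_smul', Pi.smul_apply, smul_eq_mul,
      hdi hsm hpos x i]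
    rw [← key]; ring
  have hA4 : (ϱ x ^ ((1:ℝ)/4))^(4:ℕ) = ϱ x := by
    rw [← Real.rpow_natCast (ϱ x ^ ((1:ℝ)/4)) 4, ← Real.rpow_mul (hpos x).le]
    norm_num
  simp only [hfdi]
  simp only [SS, Fin.sum_univ_three]
  linear_combination (1/256 * (vv ϱ 0 x * vv ϱ 0 x + vv ϱ 1 x * vv ϱ 1 x
    + vv ϱ 2 x * vv ϱ 2 x)^2) * hA4

end

/-- For a smooth strictly positive periodic function `ϱ` on the torus `𝕋³`,
`∫ ϱ |∇² log ϱ|² ≥ (1/8) ∫ |∇ ϱ^{1/4}|⁴`. -/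
theorem stmt9 (ϱ : (Fin 3 → ℝ) → ℝ) (hsm : ContDiff ℝ (⊤ : ℕ∞) ϱ)
    (hpos : ∀ x, 0 < ϱ x)
    (hper : ∀ (x : Fin 3 → ℝ) (i : Fin 3), ϱ (x + Pi.single i 1) = ϱ x) :
    (1/8) * ∫ x in Set.univ.pi fun _ : Fin 3 => Set.Icc (0:ℝ) 1,
        (∑ i, (fderiv ℝ (fun y => ϱ y ^ ((1:ℝ)/4)) x (Pi.single i 1))^2)^2
      ≤ ∫ x in Set.univ.pi fun _ : Fin 3 => Set.Icc (0:ℝ) 1,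
        ϱ x * ∑ i, ∑ j, (hess3 (fun y => Real.log (ϱ y)) x i j)^2 := by
  have hsetQ : (Set.univ.pi fun _ : Fin 3 => Set.Icc (0:ℝ) 1)
      = Set.Icc (0 : Fin 3 → ℝ) 1 := by
    rw [← Set.pi_univ_Icc]; rfl
  rw [hsetQ]
  simp only [hlhs hsm hpos]
  have hRW : ∀ x : Fin 3 → ℝ,
      ϱ x * ∑ i, ∑ j, (hess3 (fun y => Real.log (ϱ y)) x i j)^2 = ϱ x * TT ϱ x :=
    fun x => rfl
  simp only [hRW]
  rw [MeasureTheory.integral_const_mul]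
  have hSScont : Continuous (SS ϱ) := (hSsm hsm hpos).continuous
  have hvcont : ∀ k, Continuous (vv ϱ k) := fun k => (hvsm hsm hpos k).continuous
  have hhcont : ∀ i j, Continuous (hh ϱ i j) := fun i j => (hhsm hsm hpos i j).continuous
  have hTTcont : Continuous (TT ϱ) := by
    have h : Continuous fun x => ∑ i : Fin 3, ∑ j : Fin 3, (hh ϱ i j x)^2 :=
      continuous_finset_sum _ fun i _ => continuous_finset_sum _ fun j _ => (hhcont i j).pow 2
    exact h
  have hDDcont : Continuous (DD ϱ) := by
    have h : Continuous fun x => ∑ j : Fin 3, hh ϱ j j x :=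
      continuous_finset_sum _ fun j _ => hhcont j j
    exact h
  have hPPcont : Continuous (PP ϱ) := by
    have h : Continuous fun x => ∑ j : Fin 3, ∑ k : Fin 3, vv ϱ j x * vv ϱ k x * hh ϱ k j x :=
      continuous_finset_sum _ fun j _ => continuous_finset_sum _ fun k _ =>
        ((hvcont j).mul (hvcont k)).mul (hhcont k j)
    exact h
  have hint1 : IntegrableOn (fun x => ϱ x * (SS ϱ x)^2) (Set.Icc (0:Fin 3 → ℝ) 1) volume :=
    (hsm.continuous.mul (hSScont.pow 2)).integrableOn_Icc
  have hint2 : IntegrableOn (fun x => ϱ x * (SS ϱ x * DD ϱ x + 2 * PP ϱ x))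
      (Set.Icc (0:Fin 3 → ℝ) 1) volume :=
    (hsm.continuous.mul ((hSScont.mul hDDcont).add
      (continuous_const.mul hPPcont))).integrableOn_Icc
  have hint3 : IntegrableOn (fun x => ϱ x * TT ϱ x) (Set.Icc (0:Fin 3 → ℝ) 1) volume :=
    (hsm.continuous.mul hTTcont).integrableOn_Icc
  have hFcont : Continuous (FF ϱ) := continuous_pi fun j =>
    hsm.continuous.mul (hSScont.mul (hvcont j))
  have hu_per : ∀ (i : Fin 3) (x : Fin 3 → ℝ), uu ϱ (x + Pi.single i 1) = uu ϱ x := by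
    intro i x; unfold uu; rw [hper x i]
  have hv_per : ∀ (k i : Fin 3) (x : Fin 3 → ℝ), vv ϱ k (x + Pi.single i 1) = vv ϱ k x := by
    intro k i x
    show pd (uu ϱ) k (x + Pi.single i 1) = pd (uu ϱ) k x
    unfold pd
    rw [fderiv_shift ((husm hsm hpos).differentiable (by simp)) _ (hu_per i) x]
  have hS_per : ∀ (i : Fin 3) (x : Fin 3 → ℝ), SS ϱ (x + Pi.single i 1) = SS ϱ x := by
    intro i x; unfold SS
    exact Finset.sum_congr rfl fun k _ => by rw [hv_per k i x]
  have hF_per : ∀ (x : Fin 3 → ℝ) (i : Fin 3), FF ϱ (x + Pi.single i 1) = FF ϱ x := by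
    intro x i; funext j; unfold FF; rw [hper x i, hS_per i x, hv_per j i x]
  have hdint : IntegrableOn (fun x => ∑ i, FF' ϱ x (Pi.single i 1) i)
      (Set.Icc (0:Fin 3 → ℝ) 1) volume := by
    have heqf : (fun x => ∑ i, FF' ϱ x (Pi.single i 1) i)
        = fun x => ϱ x * (SS ϱ x)^2 + ϱ x * (SS ϱ x * DD ϱ x + 2 * PP ϱ x) :=
      funext (hdiv_eq hsm hpos)
    rw [heqf]
    exact hint1.add hint2
  have hI0 := divzero (FF ϱ) (FF' ϱ) hFcont (hFF' hsm hpos) hdint hF_per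
  simp only [hdiv_eq hsm hpos] at hI0
  rw [MeasureTheory.integral_add hint1 hint2] at hI0
  have hptw : ∀ x : Fin 3 → ℝ, -(ϱ x * (SS ϱ x * DD ϱ x + 2 * PP ϱ x))
      ≤ 1/2 * (ϱ x * (SS ϱ x)^2) + 8 * (ϱ x * TT ϱ x) := by
    intro x
    have hS0 : 0 ≤ SS ϱ x := Finset.sum_nonneg fun k _ => mul_self_nonneg _
    have hT0 : 0 ≤ TT ϱ x :=
      Finset.sum_nonneg fun i _ => Finset.sum_nonneg fun j _ => sq_nonneg _
    have hD2 : (DD ϱ x)^2 ≤ 3 * TT ϱ x := cs_diag fun i j => hh ϱ i j x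
    have hP2 : (PP ϱ x)^2 ≤ (SS ϱ x)^2 * TT ϱ x :=
      cs_cross (fun k => vv ϱ k x) (fun i j => hh ϱ i j x)
    exact pointwise_bound (hpos x).le hS0 hT0 hD2 hP2
  have hmono := MeasureTheory.integral_mono (μ := volume.restrict (Set.Icc (0:Fin 3 → ℝ) 1))
    hint2.neg ((hint1.const_mul (1/2)).add (hint3.const_mul 8)) hptw
  simp only [Pi.neg_apply, Pi.add_apply] at hmono
  rw [MeasureTheory.integral_neg] at hmono
  rw [MeasureTheory.integral_add (hint1.const_mul (1/2)) (hint3.const_mul 8),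
    MeasureTheory.integral_const_mul, MeasureTheory.integral_const_mul] at hmono
  have hI3 : 0 ≤ ∫ x in Set.Icc (0:Fin 3 → ℝ) 1, ϱ x * TT ϱ x :=
    MeasureTheory.setIntegral_nonneg measurableSet_Icc fun x _ =>
      mul_nonneg (hpos x).le
        (Finset.sum_nonneg fun i _ => Finset.sum_nonneg fun j _ => sq_nonneg _)
  linarith
end

section
/- For smooth ϱ > 0 on the torus 𝕋³_L, there is a constant C independent of ϱ such that ‖ϱ^{-1}‖_{L^∞} ≤ C (1 + ‖ϱ‖_{H³})² (1 + ‖ϱ^{-1}‖_{L⁶})³. -/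
open MeasureTheory Function Set

noncomputable section
namespace S10

abbrev E3 := Fin 3 → ℝ

/-- partial derivative in direction `i` -/
def pd (i : Fin 3) (g : E3 → ℝ) : E3 → ℝ := fun x => fderiv ℝ g x (Pi.single i 1)

lemma pd_contDiff {g : E3 → ℝ} (hg : ContDiff ℝ (⊤ : ℕ∞) g) (i : Fin 3) :
    ContDiff ℝ (⊤ : ℕ∞) (pd i g) := by
  exact (hg.fderiv_right (m := (⊤ : ℕ∞)) (by simp)).clm_apply contDiff_const

lemma pd_continuous {g : E3 → ℝ} (hg : ContDiff ℝ (⊤ : ℕ∞) g) (i : Fin 3) :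
    Continuous (pd i g) := (pd_contDiff hg i).continuous

/-- periodicity (with period 2L in each coordinate) -/
def Per (L : ℝ) (g : E3 → ℝ) : Prop :=
  ∀ (x : E3) (j : Fin 3), g (x + Pi.single j (2*L)) = g x

lemma Per.pd {L : ℝ} {g : E3 → ℝ} (hg : ContDiff ℝ (⊤ : ℕ∞) g) (hp : Per L g) (i : Fin 3) :
    Per L (pd i g) := by
  intro x j
  have hdiff : Differentiable ℝ g := hg.differentiable (by simp)
  have h1 : fderiv ℝ g (x + Pi.single j (2*L)) = fderiv ℝ g x := by
    have hc : HasFDerivAt (fun y : E3 => g (y + Pi.single j (2*L)))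
        (fderiv ℝ g (x + Pi.single j (2*L))) x := by
      have := (hdiff (x + Pi.single j (2*L))).hasFDerivAt
      simpa [Function.comp_def] using this.comp x ((hasFDerivAt_id x).add_const (Pi.single j (2*L)))
    have he : (fun y : E3 => g (y + Pi.single j (2*L))) = g := funext fun y => hp y j
    rw [he] at hc
    exact (hc.fderiv).symm
  simp only [S10.pd, h1]

lemma update_eq_add_smul (x : E3) (i : Fin 3) (t : ℝ) :
    update x i t = update x i 0 + t • (Pi.single i 1 : E3) := by
  funext j
  by_cases h : j = i
  · subst h; simp
  · simp [h, update_of_ne h]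

/-- slice derivative -/
lemma hasDerivAt_slice {g : E3 → ℝ} (hg : ContDiff ℝ (⊤ : ℕ∞) g) (x : E3) (i : Fin 3) (t : ℝ) :
    HasDerivAt (fun s => g (update x i s)) (pd i g (update x i t)) t := by
  have hinner : HasDerivAt (fun s : ℝ => update x i 0 + s • (Pi.single i 1 : E3))
      (Pi.single i 1 : E3) t := by
    simpa using ((hasDerivAt_id t).smul_const (Pi.single i (1:ℝ))).const_add (update x i 0)
  have hout := ((hg.differentiable (by simp)) (update x i t)).hasFDerivAt
  have := hout.comp_hasDerivAt t (by simpa [← update_eq_add_smul] using hinner)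
  simpa [← update_eq_add_smul, pd, Function.comp_def] using this

/-- list of partial derivatives -/
def pdL : List (Fin 3) → (E3 → ℝ) → (E3 → ℝ)
  | [], g => g
  | i :: l, g => pdL l (pd i g)

lemma pdL_contDiff {g : E3 → ℝ} (hg : ContDiff ℝ (⊤ : ℕ∞) g) (l : List (Fin 3)) :
    ContDiff ℝ (⊤ : ℕ∞) (pdL l g) := by
  induction l generalizing g with
  | nil => exact hg
  | cons i l ih => exact ih (pd_contDiff hg i)

lemma Per.pdL {L : ℝ} {g : E3 → ℝ} (hg : ContDiff ℝ (⊤ : ℕ∞) g) (hp : Per L g) (l : List (Fin 3)) :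
    Per L (pdL l g) := by
  induction l generalizing g with
  | nil => exact hp
  | cons i l ih => exact ih (pd_contDiff hg i) (hp.pd hg i)

lemma norm_pdL_le {g : E3 → ℝ} (hg : ContDiff ℝ (⊤ : ℕ∞) g) (l : List (Fin 3)) (x : E3) :
    |pdL l g x| ≤ ‖iteratedFDeriv ℝ l.length g x‖ := by
  induction l generalizing g with
  | nil => simp [pdL, norm_iteratedFDeriv_zero, Real.norm_eq_abs]
  | cons i l ih =>
      refine le_trans (ih (pd_contDiff hg i)) ?_
      have h1 : ‖iteratedFDeriv ℝ l.length (pd i g) x‖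
          ≤ ‖(Pi.single i 1 : E3)‖ * ‖iteratedFDeriv ℝ l.length (fderiv ℝ g) x‖ := by
        exact norm_iteratedFDeriv_clm_apply_const
          (hg.fderiv_right (m := (l.length : ℕ∞)) (by exact_mod_cast le_top)).contDiffAt le_rfl
      rw [norm_iteratedFDeriv_fderiv] at h1
      simpa [Pi.norm_single] using h1


variable {L : ℝ}

/-- slice integral in direction b -/
def sInt (L : ℝ) (b : Fin 3) (F : E3 → ℝ) : E3 → ℝ :=
  fun x => ∫ t in (-L)..L, F (update x b t)

lemma continuous_update2 (b : Fin 3) :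
    Continuous (fun p : E3 × ℝ => update p.1 b p.2) := by
  fun_prop

lemma sInt_continuous {F : E3 → ℝ} (hF : Continuous F) (b : Fin 3) :
    Continuous (sInt L b F) := by
  apply intervalIntegral.continuous_parametric_intervalIntegral_of_continuous'
  exact hF.comp (continuous_update2 b)

lemma sInt_update_self (b : Fin 3) (F : E3 → ℝ) (x : E3) (r : ℝ) :
    sInt L b F (update x b r) = sInt L b F x := by
  simp [sInt, Function.update_idem]

lemma cont_slice {F : E3 → ℝ} (hF : Continuous F) (b : Fin 3) (x : E3) :
    Continuous (fun t => F (update x b t)) :=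
  hF.comp ((continuous_update2 b).comp (Continuous.prodMk_right x))

lemma sInt_mono (hL : 0 < L) {F G : E3 → ℝ} (hF : Continuous F) (hG : Continuous G)
    (h : ∀ y, F y ≤ G y) (b : Fin 3) (x : E3) : sInt L b F x ≤ sInt L b G x := by
  apply intervalIntegral.integral_mono_on (by linarith)
  · exact (cont_slice hF b x).intervalIntegrable _ _
  · exact (cont_slice hG b x).intervalIntegrable _ _
  · exact fun t _ => h _

/-- FTC property along direction a -/
def FTCp (L : ℝ) (a : Fin 3) (F F' : E3 → ℝ) : Prop :=
  ∀ (x : E3) (s : ℝ), F (update x a s) - F x = ∫ σ in (x a)..s, F' (update x a σ)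

lemma ftcp_of_contDiff {F : E3 → ℝ} (hF : ContDiff ℝ (⊤ : ℕ∞) F) (a : Fin 3) :
    FTCp L a F (pd a F) := by
  intro x s
  have h := intervalIntegral.integral_eq_sub_of_hasDerivAt
    (f := fun σ => F (update x a σ)) (f' := fun σ => pd a F (update x a σ))
    (a := x a) (b := s) (fun σ _ => hasDerivAt_slice hF x a σ)
    ((cont_slice (pd_continuous hF a) a x).intervalIntegrable _ _)
  simp only [Function.update_eq_self] at h
  rw [← h]

/-- interval-integral Fubini for continuous integrands -/
lemma interval_swap {φ : ℝ → ℝ → ℝ} (hφ : Continuous (Function.uncurry φ))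
    (a b c d : ℝ) :
    ∫ t in a..b, (∫ σ in c..d, φ t σ) = ∫ σ in c..d, (∫ t in a..b, φ t σ) := by
  have core : ∀ (a b c d : ℝ), a ≤ b → c ≤ d →
      ∫ t in a..b, (∫ σ in c..d, φ t σ) = ∫ σ in c..d, (∫ t in a..b, φ t σ) := by
    intro a b c d hab hcd
    rw [intervalIntegral.integral_of_le hab, intervalIntegral.integral_of_le hcd]
    simp_rw [intervalIntegral.integral_of_le hcd, intervalIntegral.integral_of_le hab]
    have hint : Integrable (Function.uncurry φ)
        ((volume.restrict (Ioc a b)).prod (volume.restrict (Ioc c d))) := by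
      rw [Measure.prod_restrict]
      refine (IntegrableOn.mono_set ?_ (prod_mono Ioc_subset_Icc_self Ioc_subset_Icc_self))
      have h2 : IntegrableOn (Function.uncurry φ) (Icc a b ×ˢ Icc c d)
          (volume.prod volume) :=
        hφ.continuousOn.integrableOn_compact' (isCompact_Icc.prod isCompact_Icc)
          (measurableSet_Icc.prod measurableSet_Icc)
      simpa [← Measure.volume_eq_prod] using h2
    exact MeasureTheory.integral_integral_swap hint
  have symt : ∀ (p q : ℝ) (F : ℝ → ℝ), ∫ t in p..q, F t = -∫ t in q..p, F t :=
    fun p q F => intervalIntegral.integral_symm q p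
  rcases le_total a b with hab | hba
  · rcases le_total c d with hcd | hdc
    · exact core a b c d hab hcd
    · calc ∫ t in a..b, (∫ σ in c..d, φ t σ)
          = ∫ t in a..b, -(∫ σ in d..c, φ t σ) := by
            refine intervalIntegral.integral_congr (fun t _ => symt c d _)
        _ = -∫ t in a..b, (∫ σ in d..c, φ t σ) := intervalIntegral.integral_neg
        _ = -∫ σ in d..c, (∫ t in a..b, φ t σ) := by rw [core a b d c hab hdc]
        _ = ∫ σ in c..d, (∫ t in a..b, φ t σ) := (symt c d _).symm
  · rcases le_total c d with hcd | hdc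
    · calc ∫ t in a..b, (∫ σ in c..d, φ t σ)
          = -∫ t in b..a, (∫ σ in c..d, φ t σ) := symt a b _
        _ = -∫ σ in c..d, (∫ t in b..a, φ t σ) := by rw [core b a c d hba hcd]
        _ = ∫ σ in c..d, -(∫ t in b..a, φ t σ) := intervalIntegral.integral_neg.symm
        _ = ∫ σ in c..d, (∫ t in a..b, φ t σ) := by
            refine intervalIntegral.integral_congr (fun σ _ => (symt a b _).symm)
    · calc ∫ t in a..b, (∫ σ in c..d, φ t σ)
          = -∫ t in b..a, (∫ σ in c..d, φ t σ) := symt a b _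
        _ = -∫ t in b..a, -(∫ σ in d..c, φ t σ) := by
            rw [intervalIntegral.integral_congr (fun t _ => symt c d (fun σ => φ t σ))]
        _ = ∫ t in b..a, (∫ σ in d..c, φ t σ) := by rw [intervalIntegral.integral_neg, neg_neg]
        _ = ∫ σ in d..c, (∫ t in b..a, φ t σ) := core b a d c hba hdc
        _ = ∫ σ in d..c, -(∫ t in a..b, φ t σ) := by
            refine intervalIntegral.integral_congr (fun σ _ => symt b a _)
        _ = -∫ σ in d..c, (∫ t in a..b, φ t σ) := intervalIntegral.integral_neg
        _ = ∫ σ in c..d, (∫ t in a..b, φ t σ) := (symt c d _).symm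


lemma abs_intervalIntegral_le (hL : 0 < L) {φ : ℝ → ℝ} (hφ : Continuous φ) {c d : ℝ}
    (hc : c ∈ Icc (-L) L) (hd : d ∈ Icc (-L) L) :
    |∫ t in c..d, φ t| ≤ ∫ t in (-L)..L, |φ t| := by
  have habs : Continuous (fun t => |φ t|) := hφ.abs
  have key : ∀ (c d : ℝ), c ≤ d → c ∈ Icc (-L) L → d ∈ Icc (-L) L →
      |∫ t in c..d, φ t| ≤ ∫ t in (-L)..L, |φ t| := by
    intro c d hcd hc hd
    refine le_trans (intervalIntegral.abs_integral_le_integral_abs hcd) ?_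
    refine intervalIntegral.integral_mono_interval hc.1 hcd hd.2 ?_
      (habs.intervalIntegrable _ _)
    filter_upwards with t using abs_nonneg _
  rcases le_total c d with h | h
  · exact key c d h hc hd
  · rw [intervalIntegral.integral_symm d c, abs_neg]
    exact key d c h hd hc

lemma ftcp_sInt {a b : Fin 3} (hab : a ≠ b) {F F' : E3 → ℝ}
    (hF : Continuous F) (hF' : Continuous F') (h : FTCp L a F F') :
    FTCp L a (sInt L b F) (sInt L b F') := by
  intro x s
  have hswapupd : ∀ (t σ : ℝ), update (update x a σ) b t = update (update x b t) a σ :=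
    fun t σ => Function.update_comm hab σ t x
  have step1 : sInt L b F (update x a s) - sInt L b F x
      = ∫ t in (-L)..L, (F (update (update x b t) a s) - F (update x b t)) := by
    rw [sInt, sInt, ← intervalIntegral.integral_sub
      ((cont_slice hF b (update x a s)).intervalIntegrable _ _)
      ((cont_slice hF b x).intervalIntegrable _ _)]
    congr 1; funext t; rw [hswapupd t s]
  rw [step1]
  have step2 : ∀ t : ℝ, F (update (update x b t) a s) - F (update x b t)
      = ∫ σ in (x a)..s, F' (update (update x b t) a σ) := by
    intro t
    have h2 := h (update x b t) s
    rwa [Function.update_of_ne hab t x] at h2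
  have hcont2 : Continuous (Function.uncurry
      (fun t σ => F' (update (update x b t) a σ))) := by
    apply hF'.comp
    have : Continuous (fun p : ℝ × ℝ => update (update x b p.1) a p.2) := by fun_prop
    exact this
  calc ∫ t in (-L)..L, (F (update (update x b t) a s) - F (update x b t))
      = ∫ t in (-L)..L, ∫ σ in (x a)..s, F' (update (update x b t) a σ) := by
        exact intervalIntegral.integral_congr (fun t _ => step2 t)
    _ = ∫ σ in (x a)..s, ∫ t in (-L)..L, F' (update (update x b t) a σ) :=
        interval_swap hcont2 _ _ _ _
    _ = ∫ σ in (x a)..s, sInt L b F' (update x a σ) := by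
        refine intervalIntegral.integral_congr (fun σ _ => ?_)
        rw [sInt]; congr 1; funext t; rw [← hswapupd t σ]

lemma avg_bound (hL : 0 < L) {a : Fin 3} {F F' : E3 → ℝ}
    (hF : Continuous F) (hF' : Continuous F') (h : FTCp L a F F')
    (x : E3) (hx : x a ∈ Icc (-L) L) :
    F x ≤ (2*L)⁻¹ * sInt L a F x + sInt L a (fun y => |F' y|) x := by
  have hC : ∀ s ∈ Icc (-L) L, F x ≤ F (update x a s) + sInt L a (fun y => |F' y|) x := by
    intro s hs
    have h1 := h x s
    have h2 : |∫ σ in (x a)..s, F' (update x a σ)| ≤ sInt L a (fun y => |F' y|) x :=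
      abs_intervalIntegral_le hL (cont_slice hF' a x) hx hs
    have := neg_abs_le (∫ σ in (x a)..s, F' (update x a σ))
    nlinarith [abs_nonneg (∫ σ in (x a)..s, F' (update x a σ))]
  have hmono : ∫ s in (-L)..L, F x ≤
      ∫ s in (-L)..L, (F (update x a s) + sInt L a (fun y => |F' y|) x) := by
    apply intervalIntegral.integral_mono_on (by linarith)
    · exact intervalIntegrable_const
    · exact ((cont_slice hF a x).add continuous_const).intervalIntegrable _ _
    · exact hC
  rw [intervalIntegral.integral_const] at hmono
  rw [intervalIntegral.integral_add ((cont_slice hF a x).intervalIntegrable _ _)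
    intervalIntegrable_const, intervalIntegral.integral_const] at hmono
  have h2L : (0:ℝ) < 2*L := by linarith
  have : (L - -L) = 2*L := by ring
  rw [this] at hmono
  simp only [smul_eq_mul] at hmono
  calc F x = (2*L)⁻¹ * ((2*L) * F x) := by field_simp
    _ ≤ (2*L)⁻¹ * (sInt L a F x + (2*L) * sInt L a (fun y => |F' y|) x) := by
        apply mul_le_mul_of_nonneg_left _ (le_of_lt (inv_pos.mpr h2L))
        simpa [sInt] using hmono
    _ = (2*L)⁻¹ * sInt L a F x + sInt L a (fun y => |F' y|) x := by field_simp

lemma abs_bound (hL : 0 < L) {a : Fin 3} {F F' : E3 → ℝ}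
    (hF' : Continuous F') (h : FTCp L a F F')
    (x : E3) (hx : x a ∈ Icc (-L) L) {r : ℝ} (hr : r ∈ Icc (-L) L) :
    |F x| ≤ |F (update x a r)| + sInt L a (fun y => |F' y|) x := by
  have h1 := h x r
  have h2 : |∫ σ in (x a)..r, F' (update x a σ)| ≤ sInt L a (fun y => |F' y|) x :=
    abs_intervalIntegral_le hL (cont_slice hF' a x) hx hr
  calc |F x| = |F (update x a r) - (F (update x a r) - F x)| := by ring_nf
    _ ≤ |F (update x a r)| + |F (update x a r) - F x| := abs_sub _ _
    _ ≤ _ := by rw [h1]; exact add_le_add_right h2 _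

lemma sInt_pd_zero {φ : E3 → ℝ} (hφ : ContDiff ℝ (⊤ : ℕ∞) φ) (hp : Per L φ) (a : Fin 3) (x : E3) :
    sInt L a (pd a φ) x = 0 := by
  have h := intervalIntegral.integral_eq_sub_of_hasDerivAt
    (f := fun σ => φ (update x a σ)) (f' := fun σ => pd a φ (update x a σ))
    (a := -L) (b := L) (fun σ _ => hasDerivAt_slice hφ x a σ)
    ((cont_slice (pd_continuous hφ a) a x).intervalIntegrable _ _)
  rw [sInt, h]
  have heq : update x a L = update x a (-L) + Pi.single a (2*L) := by
    funext j
    by_cases hj : j = a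
    · subst hj; simp; ring
    · simp [Function.update_of_ne hj, Pi.single_eq_of_ne hj]
  rw [heq, hp (update x a (-L)) a, sub_self]


lemma pd_mul (a : Fin 3) {u v : E3 → ℝ} (hu : ContDiff ℝ (⊤ : ℕ∞) u) (hv : ContDiff ℝ (⊤ : ℕ∞) v) :
    pd a (fun y => u y * v y) = fun x => pd a u x * v x + u x * pd a v x := by
  funext x
  have := fderiv_fun_mul (𝕜 := ℝ) ((hu.differentiable (by simp)) x)
    ((hv.differentiable (by simp)) x)
  simp only [pd, this, ContinuousLinearMap.add_apply, ContinuousLinearMap.smul_apply,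
    smul_eq_mul]
  ring

lemma pd_comm (a b : Fin 3) {g : E3 → ℝ} (hg : ContDiff ℝ (⊤ : ℕ∞) g) :
    pd a (pd b g) = pd b (pd a g) := by
  funext x
  have hd1 : ContDiff ℝ (⊤ : ℕ∞) (fderiv ℝ g) := hg.fderiv_right (m := (⊤ : ℕ∞)) (by simp)
  have hdiff : DifferentiableAt ℝ (fderiv ℝ g) x := (hd1.differentiable (by simp) x)
  have key : ∀ c : Fin 3, pd c g = fun y => (fderiv ℝ g y) (Pi.single c 1) := fun _ => rfl
  have hfd : ∀ (c : Fin 3), fderiv ℝ (pd c g) x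
      = (fderiv ℝ (fderiv ℝ g) x).flip (Pi.single c 1) := by
    intro c
    rw [key c]
    rw [fderiv_clm_apply hdiff (differentiableAt_const _)]
    simp
  have hsym := second_derivative_symmetric
    (f := g) (f' := fderiv ℝ g) (f'' := fderiv ℝ (fderiv ℝ g) x) (x := x)
    (fun y => ((hg.differentiable (by simp)) y).hasFDerivAt) hdiff.hasFDerivAt
  show fderiv ℝ (pd b g) x (Pi.single a 1) = fderiv ℝ (pd a g) x (Pi.single b 1)
  rw [hfd a, hfd b]
  simp only [ContinuousLinearMap.flip_apply]
  exact hsym _ _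

lemma sInt_add (hL : 0 < L) {F G : E3 → ℝ} (hF : Continuous F) (hG : Continuous G)
    (b : Fin 3) (x : E3) :
    sInt L b (fun y => F y + G y) x = sInt L b F x + sInt L b G x := by
  unfold sInt
  exact intervalIntegral.integral_add ((cont_slice hF b x).intervalIntegrable _ _)
    ((cont_slice hG b x).intervalIntegrable _ _)

lemma sInt_const_mul (c : ℝ) (F : E3 → ℝ) (b : Fin 3) (x : E3) :
    sInt L b (fun y => c * F y) x = c * sInt L b F x := by
  unfold sInt; exact intervalIntegral.integral_const_mul c _

lemma abs_sInt_le (hL : 0 < L) {F : E3 → ℝ} (hF : Continuous F) (b : Fin 3) (x : E3) :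
    |sInt L b F x| ≤ sInt L b (fun y => |F y|) x := by
  unfold sInt
  exact intervalIntegral.abs_integral_le_integral_abs (by linarith)

lemma sInt_comm {a b : Fin 3} (hab : a ≠ b) {F : E3 → ℝ} (hF : Continuous F) (x : E3) :
    sInt L a (sInt L b F) x = sInt L b (sInt L a F) x := by
  unfold sInt
  have hswapupd : ∀ (t σ : ℝ), update (update x a σ) b t = update (update x b t) a σ :=
    fun t σ => Function.update_comm hab σ t x
  have hcont2 : Continuous (Function.uncurry
      (fun σ t => F (update (update x a σ) b t))) := by
    apply hF.comp; fun_prop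
  have := interval_swap hcont2 (-L) L (-L) L
  calc ∫ σ in (-L)..L, ∫ t in (-L)..L, F (update (update x a σ) b t)
      = ∫ t in (-L)..L, ∫ σ in (-L)..L, F (update (update x a σ) b t) := this
    _ = ∫ t in (-L)..L, ∫ σ in (-L)..L, F (update (update x b t) a σ) := by
        refine intervalIntegral.integral_congr (fun t _ => ?_)
        refine intervalIntegral.integral_congr (fun σ _ => ?_)
        rw [hswapupd]

lemma sInt_nonneg (hL : 0 < L) {F : E3 → ℝ} (h : ∀ y, 0 ≤ F y) (b : Fin 3) (x : E3) :
    0 ≤ sInt L b F x := by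
  unfold sInt
  apply intervalIntegral.integral_nonneg (by linarith)
  exact fun t _ => h _

/-- the majorant -/
def Smaj (ϱ : E3 → ℝ) : E3 → ℝ := fun y => ∑ m ∈ Finset.range 4, ‖iteratedFDeriv ℝ m ϱ y‖^2

lemma Smaj_continuous {ϱ : E3 → ℝ} (hϱ : ContDiff ℝ (⊤ : ℕ∞) ϱ) : Continuous (Smaj ϱ) := by
  apply continuous_finset_sum
  intro m _
  exact ((hϱ.continuous_iteratedFDeriv (m := m) (by exact_mod_cast le_top)).norm).pow 2

lemma Smaj_nonneg (ϱ : E3 → ℝ) (y : E3) : 0 ≤ Smaj ϱ y :=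
  Finset.sum_nonneg fun m _ => pow_nonneg (norm_nonneg _) 2

lemma sq_pdL_le_Smaj {ϱ : E3 → ℝ} (hϱ : ContDiff ℝ (⊤ : ℕ∞) ϱ) {l : List (Fin 3)}
    (hl : l.length ≤ 3) (y : E3) : (pdL l ϱ y)^2 ≤ Smaj ϱ y := by
  have h1 := norm_pdL_le hϱ l y
  have h2 : (pdL l ϱ y)^2 ≤ ‖iteratedFDeriv ℝ l.length ϱ y‖^2 := by
    have := abs_nonneg (pdL l ϱ y)
    nlinarith [sq_abs (pdL l ϱ y)]
  refine le_trans h2 ?_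
  apply Finset.single_le_sum (f := fun m => ‖iteratedFDeriv ℝ m ϱ y‖^2)
    (fun m _ => pow_nonneg (norm_nonneg _) 2)
  simpa using Nat.lt_succ_of_le hl


lemma pd_add (a : Fin 3) {u v : E3 → ℝ} (hu : ContDiff ℝ (⊤ : ℕ∞) u) (hv : ContDiff ℝ (⊤ : ℕ∞) v) :
    pd a (fun y => u y + v y) = fun x => pd a u x + pd a v x := by
  funext x
  have := fderiv_fun_add (𝕜 := ℝ) ((hu.differentiable (by simp)) x) ((hv.differentiable (by simp)) x)
  simp only [pd, this, ContinuousLinearMap.add_apply]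

lemma avg_of_pointwise (hL : 0 < L) {F : E3 → ℝ} (hF : Continuous F) (a : Fin 3) (c : ℝ)
    (x : E3) (hbd : ∀ r ∈ Icc (-L) L, F x ≤ F (update x a r) + c) :
    F x ≤ (2*L)⁻¹ * sInt L a F x + c := by
  have h2L : (0:ℝ) < 2*L := by linarith
  have hmono : ∫ s in (-L)..L, F x ≤ ∫ s in (-L)..L, (F (update x a s) + c) := by
    apply intervalIntegral.integral_mono_on (by linarith)
    · exact intervalIntegrable_const
    · exact ((cont_slice hF a x).add continuous_const).intervalIntegrable _ _
    · exact hbd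
  rw [intervalIntegral.integral_const] at hmono
  rw [intervalIntegral.integral_add ((cont_slice hF a x).intervalIntegrable _ _)
    intervalIntegrable_const, intervalIntegral.integral_const] at hmono
  have heq : (L - -L) = 2*L := by ring
  rw [heq] at hmono
  simp only [smul_eq_mul] at hmono
  calc F x = (2*L)⁻¹ * ((2*L) * F x) := by field_simp
    _ ≤ (2*L)⁻¹ * (sInt L a F x + (2*L) * c) := by
        apply mul_le_mul_of_nonneg_left _ (le_of_lt (inv_pos.mpr h2L))
        simpa [sInt] using hmono
    _ = (2*L)⁻¹ * sInt L a F x + c := by field_simp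

/-- pull a constant through one slice integral with a pointwise bound -/
lemma sInt_le_const_mul (hL : 0 < L) {F G : E3 → ℝ} (hF : Continuous F) (hG : Continuous G)
    {c : ℝ} (hpt : ∀ y, F y ≤ c * G y) (b : Fin 3) (x : E3) :
    sInt L b F x ≤ c * sInt L b G x := by
  rw [← sInt_const_mul]
  exact sInt_mono hL hF (continuous_const.mul hG) hpt b x


def CC (L : ℝ) : ℝ := ((2*L)⁻¹+1) * ((2*L)⁻¹*((2*L)⁻¹*2 + 4) + ((2*L)⁻¹*4 + 8))

lemma CC_pos {L : ℝ} (hL : 0 < L) : 0 < CC L := by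
  have h1 : (0:ℝ) < (2*L)⁻¹ := by positivity
  unfold CC; positivity

lemma pd_sq_bound (hL : 0 < L) {ϱ : E3 → ℝ} (hϱ : ContDiff ℝ (⊤ : ℕ∞) ϱ) (hp : Per L ϱ)
    (i : Fin 3) (x : E3) (hx : ∀ j, x j ∈ Icc (-L) L) :
    (pd i ϱ x)^2 ≤ CC L * sInt L 2 (sInt L 1 (sInt L 0 (Smaj ϱ))) x := by
  -- abbreviations
  set f := pd i ϱ with hfdef
  set g := pd 0 f with hgdef
  have hf : ContDiff ℝ (⊤ : ℕ∞) f := pd_contDiff hϱ i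
  have hg : ContDiff ℝ (⊤ : ℕ∞) g := pd_contDiff hf 0
  have hfP : Per L f := Per.pd hϱ hp i
  have hgP : Per L g := Per.pd hf hfP 0
  set h := fun y => f y * f y + g y * g y with hhdef
  have hh : ContDiff ℝ (⊤ : ℕ∞) h := (hf.mul hf).add (hg.mul hg)
  have hhc : Continuous h := hh.continuous
  have s1f := pd_contDiff hf 1
  have s2f := pd_contDiff hf 2
  have s1g := pd_contDiff hg 1
  have s2g := pd_contDiff hg 2
  have s0g := pd_contDiff hg 0
  have s21f := pd_contDiff s1f 2
  have s21g := pd_contDiff s1g 2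
  have hSc : Continuous (Smaj ϱ) := Smaj_continuous hϱ
  -- square bounds
  have sqf : ∀ y, (f y)^2 ≤ Smaj ϱ y := fun y => sq_pdL_le_Smaj hϱ (l := [i]) (by simp) y
  have sqg : ∀ y, (g y)^2 ≤ Smaj ϱ y := fun y => sq_pdL_le_Smaj hϱ (l := [i,0]) (by simp) y
  have sq1f : ∀ y, (pd 1 f y)^2 ≤ Smaj ϱ y :=
    fun y => sq_pdL_le_Smaj hϱ (l := [i,1]) (by simp) y
  have sq2f : ∀ y, (pd 2 f y)^2 ≤ Smaj ϱ y :=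
    fun y => sq_pdL_le_Smaj hϱ (l := [i,2]) (by simp) y
  have sq0g : ∀ y, (pd 0 g y)^2 ≤ Smaj ϱ y :=
    fun y => sq_pdL_le_Smaj hϱ (l := [i,0,0]) (by simp) y
  have sq1g : ∀ y, (pd 1 g y)^2 ≤ Smaj ϱ y :=
    fun y => sq_pdL_le_Smaj hϱ (l := [i,0,1]) (by simp) y
  have sq2g : ∀ y, (pd 2 g y)^2 ≤ Smaj ϱ y :=
    fun y => sq_pdL_le_Smaj hϱ (l := [i,0,2]) (by simp) y
  have sq21f : ∀ y, (pd 2 (pd 1 f) y)^2 ≤ Smaj ϱ y :=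
    fun y => sq_pdL_le_Smaj hϱ (l := [i,1,2]) (by simp) y
  have prodS : ∀ {u v : E3 → ℝ}, (∀ z, (u z)^2 ≤ Smaj ϱ z) → (∀ z, (v z)^2 ≤ Smaj ϱ z) →
      ∀ z, |u z * v z| ≤ Smaj ϱ z := by
    intro u v hu hv z
    have h1 := hu z; have h2 := hv z
    have h3 : |u z * v z| = |u z| * |v z| := abs_mul _ _
    nlinarith [sq_abs (u z), sq_abs (v z), sq_nonneg (|u z| - |v z|), abs_nonneg (u z),
      abs_nonneg (v z)]
  -- pointwise bounds on h and its derivatives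
  have hbh : ∀ z, h z ≤ 2 * Smaj ϱ z := by
    intro z
    have := sqf z; have := sqg z
    simp only [hhdef]
    nlinarith [pow_two_nonneg (f z), pow_two_nonneg (g z), sq (f z)]
  have e1 : pd 1 h = fun z => (pd 1 f z * f z + f z * pd 1 f z)
      + (pd 1 g z * g z + g z * pd 1 g z) := by
    simp only [hhdef, pd_add 1 (hf.mul hf) (hg.mul hg), pd_mul 1 hf hf, pd_mul 1 hg hg]
  have e1' : pd 2 h = fun z => (pd 2 f z * f z + f z * pd 2 f z)
      + (pd 2 g z * g z + g z * pd 2 g z) := by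
    simp only [hhdef, pd_add 2 (hf.mul hf) (hg.mul hg), pd_mul 2 hf hf, pd_mul 2 hg hg]
  have e1z : ∀ z, pd 1 h z = (pd 1 f z * f z + f z * pd 1 f z)
      + (pd 1 g z * g z + g z * pd 1 g z) := fun z => by rw [e1]
  have e1z' : ∀ z, pd 2 h z = (pd 2 f z * f z + f z * pd 2 f z)
      + (pd 2 g z * g z + g z * pd 2 g z) := fun z => by rw [e1']
  have hb1 : ∀ z, |pd 1 h z| ≤ 4 * Smaj ϱ z := by
    intro z
    rw [e1z]
    have k1 := abs_le.mp (prodS sq1f sqf z)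
    have k2 := abs_le.mp (prodS sqf sq1f z)
    have k3 := abs_le.mp (prodS sq1g sqg z)
    have k4 := abs_le.mp (prodS sqg sq1g z)
    rw [abs_le]; constructor <;> [linarith [k1.1, k2.1, k3.1, k4.1]; linarith [k1.2, k2.2, k3.2, k4.2]]
  have hb2 : ∀ z, |pd 2 h z| ≤ 4 * Smaj ϱ z := by
    intro z
    rw [e1z']
    have k1 := abs_le.mp (prodS sq2f sqf z)
    have k2 := abs_le.mp (prodS sqf sq2f z)
    have k3 := abs_le.mp (prodS sq2g sqg z)
    have k4 := abs_le.mp (prodS sqg sq2g z)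
    rw [abs_le]; constructor <;> [linarith [k1.1, k2.1, k3.1, k4.1]; linarith [k1.2, k2.2, k3.2, k4.2]]
  -- the IBP bound on D21
  have hA1 : ContDiff ℝ (⊤ : ℕ∞) (fun z => pd 1 f z * f z + f z * pd 1 f z) :=
    (s1f.mul hf).add (hf.mul s1f)
  have hB1 : ContDiff ℝ (⊤ : ℕ∞) (fun z => pd 1 g z * g z + g z * pd 1 g z) :=
    (s1g.mul hg).add (hg.mul s1g)
  have e2 : pd 2 (pd 1 h) = fun z =>
      ((pd 2 (pd 1 f) z * f z + pd 1 f z * pd 2 f z) + (pd 2 f z * pd 1 f z + f z * pd 2 (pd 1 f) z))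
      + ((pd 2 (pd 1 g) z * g z + pd 1 g z * pd 2 g z)
        + (pd 2 g z * pd 1 g z + g z * pd 2 (pd 1 g) z)) := by
    rw [e1]
    simp only [pd_add 2 hA1 hB1, pd_add 2 (s1f.mul hf) (hf.mul s1f),
      pd_add 2 (s1g.mul hg) (hg.mul s1g), pd_mul 2 s1f hf, pd_mul 2 hf s1f,
      pd_mul 2 s1g hg, pd_mul 2 hg s1g]
  -- ψ = g * pd2 pd1 f ; pd0 ψ
  have hψ : ContDiff ℝ (⊤ : ℕ∞) (fun z => g z * pd 2 (pd 1 f) z) := hg.mul s21f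
  have hψP : Per L (fun z => g z * pd 2 (pd 1 f) z) := by
    intro z j
    have h1 := hgP z j
    have h2 := (Per.pd s1f (Per.pd hf hfP 1) 2) z j
    simp only [h1, h2]
  have comm0 : pd 0 (pd 2 (pd 1 f)) = pd 2 (pd 1 g) := by
    rw [pd_comm 0 2 s1f, pd_comm 0 1 hf]
  have eψ : pd 0 (fun z => g z * pd 2 (pd 1 f) z)
      = fun z => pd 0 g z * pd 2 (pd 1 f) z + g z * pd 2 (pd 1 g) z := by
    rw [pd_mul 0 hg s21f, comm0]
  have e3 : pd 2 (pd 1 h) = fun z =>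
      (((pd 2 (pd 1 f) z * f z + pd 1 f z * pd 2 f z)
        + (pd 2 f z * pd 1 f z + f z * pd 2 (pd 1 f) z))
      + ((-(pd 0 g z * pd 2 (pd 1 f) z) + pd 1 g z * pd 2 g z)
        + (pd 2 g z * pd 1 g z + -(pd 0 g z * pd 2 (pd 1 f) z))))
      + (pd 0 (fun z => g z * pd 2 (pd 1 f) z) z + pd 0 (fun z => g z * pd 2 (pd 1 f) z) z) := by
    rw [e2, eψ]
    funext z
    ring
  have cf : Continuous f := hf.continuous
  have cg : Continuous g := hg.continuous
  have c1f : Continuous (pd 1 f) := pd_continuous hf 1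
  have c2f : Continuous (pd 2 f) := pd_continuous hf 2
  have c0g : Continuous (pd 0 g) := pd_continuous hg 0
  have c1g : Continuous (pd 1 g) := pd_continuous hg 1
  have c2g : Continuous (pd 2 g) := pd_continuous hg 2
  have c21f : Continuous (pd 2 (pd 1 f)) := pd_continuous s1f 2
  have cGood : Continuous (fun z =>
      (((pd 2 (pd 1 f) z * f z + pd 1 f z * pd 2 f z)
        + (pd 2 f z * pd 1 f z + f z * pd 2 (pd 1 f) z))
      + ((-(pd 0 g z * pd 2 (pd 1 f) z) + pd 1 g z * pd 2 g z)
        + (pd 2 g z * pd 1 g z + -(pd 0 g z * pd 2 (pd 1 f) z))))) :=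
    (((c21f.mul cf).add (c1f.mul c2f)).add ((c2f.mul c1f).add (cf.mul c21f))).add
      ((((c0g.mul c21f).neg).add (c1g.mul c2g)).add ((c2g.mul c1g).add ((c0g.mul c21f).neg)))
  have cpψ : Continuous (pd 0 (fun z => g z * pd 2 (pd 1 f) z)) := pd_continuous hψ 0
  -- |D21 y| ≤ 8 sInt0 Smaj y
  have hD21 : ∀ y, |sInt L 0 (pd 2 (pd 1 h)) y| ≤ 8 * sInt L 0 (Smaj ϱ) y := by
    intro y
    have hsplit : sInt L 0 (pd 2 (pd 1 h)) y
        = sInt L 0 (fun z =>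
          (((pd 2 (pd 1 f) z * f z + pd 1 f z * pd 2 f z)
            + (pd 2 f z * pd 1 f z + f z * pd 2 (pd 1 f) z))
          + ((-(pd 0 g z * pd 2 (pd 1 f) z) + pd 1 g z * pd 2 g z)
            + (pd 2 g z * pd 1 g z + -(pd 0 g z * pd 2 (pd 1 f) z))))) y
        + sInt L 0 (fun z => pd 0 (fun w => g w * pd 2 (pd 1 f) w) z
            + pd 0 (fun w => g w * pd 2 (pd 1 f) w) z) y := by
      rw [← sInt_add hL cGood (G := fun z => pd 0 (fun w => g w * pd 2 (pd 1 f) w) z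
            + pd 0 (fun w => g w * pd 2 (pd 1 f) w) z) (cpψ.add cpψ) 0 y, e3]
    have hzero : sInt L 0 (fun z => pd 0 (fun w => g w * pd 2 (pd 1 f) w) z
        + pd 0 (fun w => g w * pd 2 (pd 1 f) w) z) y = 0 := by
      rw [sInt_add hL cpψ cpψ 0 y, sInt_pd_zero hψ hψP 0 y]
      ring
    rw [hsplit, hzero, add_zero]
    refine le_trans (abs_sInt_le hL cGood 0 y) ?_
    have hpt : ∀ z, |(((pd 2 (pd 1 f) z * f z + pd 1 f z * pd 2 f z)
          + (pd 2 f z * pd 1 f z + f z * pd 2 (pd 1 f) z))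
          + ((-(pd 0 g z * pd 2 (pd 1 f) z) + pd 1 g z * pd 2 g z)
          + (pd 2 g z * pd 1 g z + -(pd 0 g z * pd 2 (pd 1 f) z))))|
        ≤ 8 * Smaj ϱ z := by
      intro z
      have k1 := abs_le.mp (prodS sq21f sqf z)
      have k2 := abs_le.mp (prodS sq1f sq2f z)
      have k3 := abs_le.mp (prodS sq2f sq1f z)
      have k4 := abs_le.mp (prodS sqf sq21f z)
      have k5 := abs_le.mp (prodS sq0g sq21f z)
      have k6 := abs_le.mp (prodS sq1g sq2g z)
      have k7 := abs_le.mp (prodS sq2g sq1g z)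
      rw [abs_le]
      constructor
      · linarith [k1.1, k2.1, k3.1, k4.1, k5.2, k6.1, k7.1]
      · linarith [k1.2, k2.2, k3.2, k4.2, k5.1, k6.2, k7.2]
    exact sInt_le_const_mul hL cGood.abs hSc hpt 0 y
  -- continuity bank for iterated integrals
  have cS0 : Continuous (sInt L 0 (Smaj ϱ)) := sInt_continuous hSc 0
  have cS10 : Continuous (sInt L 1 (sInt L 0 (Smaj ϱ))) := sInt_continuous cS0 1
  have cS20 : Continuous (sInt L 2 (sInt L 0 (Smaj ϱ))) := sInt_continuous cS0 2
  have cW : Continuous (sInt L 0 h) := sInt_continuous hhc 0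
  have cp1h : Continuous (pd 1 h) := pd_continuous hh 1
  have cp2h : Continuous (pd 2 h) := pd_continuous hh 2
  have cp21h : Continuous (pd 2 (pd 1 h)) := pd_continuous (pd_contDiff hh 1) 2
  have cD1 : Continuous (sInt L 0 (pd 1 h)) := sInt_continuous cp1h 0
  have cD21 : Continuous (sInt L 0 (pd 2 (pd 1 h))) := sInt_continuous cp21h 0
  have cG : Continuous (sInt L 1 (sInt L 0 h)) := sInt_continuous cW 1
  have cDG : Continuous (sInt L 1 (sInt L 0 (pd 2 h))) :=
    sInt_continuous (sInt_continuous cp2h 0) 1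
  have cJ : Continuous (sInt L 1 (fun y => |sInt L 0 (pd 1 h) y|)) :=
    sInt_continuous cD1.abs 1
  have c2D21 : Continuous (sInt L 2 (fun y => |sInt L 0 (pd 2 (pd 1 h)) y|)) :=
    sInt_continuous cD21.abs 2
  set T := sInt L 2 (sInt L 1 (sInt L 0 (Smaj ϱ))) x with hTdef
  have hTnn : 0 ≤ T := by
    apply sInt_nonneg hL _ 2 x
    intro y
    apply sInt_nonneg hL _ 1 y
    intro z
    exact sInt_nonneg hL (fun w => Smaj_nonneg ϱ w) 0 z
  have hinv : (0:ℝ) < (2*L)⁻¹ := by positivity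
  -- Step 1
  have step1 : f x * f x ≤ ((2*L)⁻¹ + 1) * sInt L 0 h x := by
    have havg := avg_bound hL (F := fun w => f w * f w) (hf.continuous.mul hf.continuous)
      (pd_continuous (hf.mul hf) 0) (ftcp_of_contDiff (hf.mul hf) 0) x (hx 0)
    have e0 : ∀ z, pd 0 (fun w => f w * f w) z = pd 0 f z * f z + f z * pd 0 f z :=
      fun z => by rw [pd_mul 0 hf hf]
    have b0 : ∀ y, |pd 0 (fun w => f w * f w) y| ≤ h y := by
      intro y
      rw [e0 y, abs_le]
      simp only [hhdef]
      constructor <;> nlinarith [sq_nonneg (f y - g y), sq_nonneg (f y + g y), sq (f y)]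
    have m1 : sInt L 0 (fun w => f w * f w) x ≤ sInt L 0 h x := by
      apply sInt_mono hL (F := fun w => f w * f w) (hf.continuous.mul hf.continuous) hhc _ 0 x
      intro y
      simp only [hhdef]
      nlinarith [sq_nonneg (g y)]
    have m2 : sInt L 0 (fun y => |pd 0 (fun w => f w * f w) y|) x ≤ sInt L 0 h x :=
      sInt_mono hL (pd_continuous (hf.mul hf) 0).abs hhc b0 0 x
    have hWnn : 0 ≤ sInt L 0 h x := by
      apply sInt_nonneg hL _ 0 x
      intro z
      simp only [hhdef]
      nlinarith [sq_nonneg (f z), sq_nonneg (g z)]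
    nlinarith [mul_le_mul_of_nonneg_left m1 (le_of_lt hinv)]
  -- Step 2
  have ftc1 : FTCp L 1 (sInt L 0 h) (sInt L 0 (pd 1 h)) :=
    ftcp_sInt (by decide) hhc cp1h (ftcp_of_contDiff hh 1)
  have step2 : sInt L 0 h x ≤ (2*L)⁻¹ * sInt L 1 (sInt L 0 h) x
      + sInt L 1 (fun y => |sInt L 0 (pd 1 h) y|) x :=
    avg_bound hL cW cD1 ftc1 x (hx 1)
  -- Step 3 : bound G = sInt1 (sInt0 h)
  have ftc2G : FTCp L 2 (sInt L 1 (sInt L 0 h)) (sInt L 1 (sInt L 0 (pd 2 h))) :=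
    ftcp_sInt (by decide) cW (sInt_continuous cp2h 0)
      (ftcp_sInt (by decide) hhc cp2h (ftcp_of_contDiff hh 2))
  have step3 : sInt L 1 (sInt L 0 h) x ≤ (2*L)⁻¹ * sInt L 2 (sInt L 1 (sInt L 0 h)) x
      + sInt L 2 (fun y => |sInt L 1 (sInt L 0 (pd 2 h)) y|) x :=
    avg_bound hL cG cDG ftc2G x (hx 2)
  -- Step 4 : bound J
  have ftc2D1 : FTCp L 2 (sInt L 0 (pd 1 h)) (sInt L 0 (pd 2 (pd 1 h))) := by
    have hcomm : pd 2 (pd 1 h) = pd 2 (pd 1 h) := rfl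
    exact ftcp_sInt (by decide) cp1h cp21h (ftcp_of_contDiff (pd_contDiff hh 1) 2)
  have step4 : sInt L 1 (fun y => |sInt L 0 (pd 1 h) y|) x
      ≤ (2*L)⁻¹ * sInt L 2 (sInt L 1 (fun y => |sInt L 0 (pd 1 h) y|)) x
      + sInt L 1 (sInt L 2 (fun y => |sInt L 0 (pd 2 (pd 1 h)) y|)) x := by
    apply avg_of_pointwise hL cJ 2 _ x
    intro r hr
    have hpt : ∀ t : ℝ, |sInt L 0 (pd 1 h) (update x 1 t)|
        ≤ |sInt L 0 (pd 1 h) (update (update x 1 t) 2 r)|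
          + sInt L 2 (fun y => |sInt L 0 (pd 2 (pd 1 h)) y|) (update x 1 t) := by
      intro t
      apply abs_bound hL cD21 ftc2D1 (update x 1 t) _ hr
      rw [Function.update_of_ne (by decide)]
      exact hx 2
    calc sInt L 1 (fun y => |sInt L 0 (pd 1 h) y|) x
        ≤ ∫ t in (-L)..L, (|sInt L 0 (pd 1 h) (update (update x 1 t) 2 r)|
          + sInt L 2 (fun y => |sInt L 0 (pd 2 (pd 1 h)) y|) (update x 1 t)) := by
          unfold sInt
          apply intervalIntegral.integral_mono_on (by linarith)
          · exact (cont_slice cD1.abs 1 x).intervalIntegrable _ _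
          · apply Continuous.intervalIntegrable
            apply Continuous.add
            · have : Continuous (fun t : ℝ => update (update x 1 t) 2 r) := by fun_prop
              exact cD1.abs.comp this
            · exact cont_slice c2D21 1 x
          · exact fun t _ => hpt t
      _ = sInt L 1 (fun y => |sInt L 0 (pd 1 h) y|) (update x 2 r)
          + sInt L 1 (sInt L 2 (fun y => |sInt L 0 (pd 2 (pd 1 h)) y|)) x := by
          rw [intervalIntegral.integral_add]
          · congr 1
            unfold sInt
            refine intervalIntegral.integral_congr (fun t _ => ?_)
            rw [Function.update_comm (by decide : (1:Fin 3) ≠ 2) t r x]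
          · apply Continuous.intervalIntegrable
            have : Continuous (fun t : ℝ => update (update x 1 t) 2 r) := by fun_prop
            exact cD1.abs.comp this
          · exact (cont_slice c2D21 1 x).intervalIntegrable _ _
  -- Step 5 : majorant bounds
  have lift0 : ∀ {F : E3 → ℝ} {c : ℝ}, Continuous F → (∀ z, F z ≤ c * Smaj ϱ z) →
      ∀ y, sInt L 0 F y ≤ c * sInt L 0 (Smaj ϱ) y :=
    fun hF hc y => sInt_le_const_mul hL hF hSc hc 0 y
  -- (ii) sInt2 (sInt1 (sInt0 h)) ≤ 2T
  have bG : sInt L 2 (sInt L 1 (sInt L 0 h)) x ≤ 2 * T := by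
    rw [hTdef]
    apply sInt_le_const_mul hL cG cS10 _ 2 x
    intro y
    apply sInt_le_const_mul hL cW cS0 _ 1 y
    exact lift0 hhc hbh
  -- (i) sInt2 |DG| ≤ 4T
  have bDG : sInt L 2 (fun y => |sInt L 1 (sInt L 0 (pd 2 h)) y|) x ≤ 4 * T := by
    rw [hTdef]
    apply sInt_le_const_mul hL cDG.abs cS10 _ 2 x
    intro y
    refine le_trans (abs_sInt_le hL (sInt_continuous cp2h 0) 1 y) ?_
    apply sInt_le_const_mul hL (sInt_continuous cp2h 0).abs cS0 _ 1 y
    intro z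
    refine le_trans (abs_sInt_le hL cp2h 0 z) ?_
    exact lift0 cp2h.abs hb2 z
  -- (iii) sInt2 (sInt1 |D1|) ≤ 4T
  have bJ2 : sInt L 2 (sInt L 1 (fun y => |sInt L 0 (pd 1 h) y|)) x ≤ 4 * T := by
    rw [hTdef]
    apply sInt_le_const_mul hL cJ cS10 _ 2 x
    intro y
    apply sInt_le_const_mul hL cD1.abs cS0 _ 1 y
    intro z
    refine le_trans (abs_sInt_le hL cp1h 0 z) ?_
    exact lift0 cp1h.abs hb1 z
  -- (iv) sInt1 (sInt2 |D21|) ≤ 8T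
  have bD21 : sInt L 1 (sInt L 2 (fun y => |sInt L 0 (pd 2 (pd 1 h)) y|)) x ≤ 8 * T := by
    have hcm : sInt L 1 (sInt L 2 (sInt L 0 (Smaj ϱ))) x
        = sInt L 2 (sInt L 1 (sInt L 0 (Smaj ϱ))) x := sInt_comm (by decide) cS0 x
    have : sInt L 1 (sInt L 2 (fun y => |sInt L 0 (pd 2 (pd 1 h)) y|)) x
        ≤ 8 * sInt L 1 (sInt L 2 (sInt L 0 (Smaj ϱ))) x := by
      apply sInt_le_const_mul hL c2D21 cS20 _ 1 x
      intro y
      apply sInt_le_const_mul hL cD21.abs cS0 _ 2 y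
      exact hD21
    rw [hcm] at this
    exact this
  -- final assembly
  have hG : sInt L 1 (sInt L 0 h) x ≤ (2*L)⁻¹ * (2*T) + 4*T := by
    have m1 := mul_le_mul_of_nonneg_left bG (le_of_lt hinv)
    linarith [step3, bDG]
  have hJ : sInt L 1 (fun y => |sInt L 0 (pd 1 h) y|) x ≤ (2*L)⁻¹ * (4*T) + 8*T := by
    have m1 := mul_le_mul_of_nonneg_left bJ2 (le_of_lt hinv)
    linarith [step4, bD21]
  have hW2 : sInt L 0 h x ≤ (2*L)⁻¹ * ((2*L)⁻¹ * (2*T) + 4*T) + ((2*L)⁻¹ * (4*T) + 8*T) := by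
    have m1 := mul_le_mul_of_nonneg_left hG (le_of_lt hinv)
    linarith [step2, hJ]
  have hc0 : (0:ℝ) ≤ (2*L)⁻¹ + 1 := by positivity
  calc (pd i ϱ x)^2 = f x * f x := by rw [← hfdef]; ring
    _ ≤ ((2*L)⁻¹ + 1) * sInt L 0 h x := step1
    _ ≤ ((2*L)⁻¹ + 1) * ((2*L)⁻¹ * ((2*L)⁻¹ * (2*T) + 4*T) + ((2*L)⁻¹ * (4*T) + 8*T)) :=
        mul_le_mul_of_nonneg_left hW2 hc0
    _ = CC L * T := by unfold CC; ring


/-- 1D conversion: lintegral over restricted measure vs interval integral -/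
lemma oneD_conv (hL : 0 < L) {φ : ℝ → ℝ} (hφ : Continuous φ) (hnn : ∀ t, 0 ≤ φ t) :
    ∫⁻ t, ENNReal.ofReal (φ t) ∂((volume : Measure ℝ).restrict (Icc (-L) L))
      = ENNReal.ofReal (∫ t in (-L)..L, φ t) := by
  have hint : Integrable φ ((volume : Measure ℝ).restrict (Icc (-L) L)) :=
    hφ.continuousOn.integrableOn_compact isCompact_Icc
  rw [← MeasureTheory.ofReal_integral_eq_lintegral_ofReal hint
    (Filter.Eventually.of_forall hnn)]
  congr 1
  rw [intervalIntegral.integral_of_le (by linarith), ← integral_Icc_eq_integral_Ioc]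

/-- iterated slice integrals equal the cube integral, for continuous nonnegative integrands -/
lemma conv (hL : 0 < L) {F : E3 → ℝ} (hF : Continuous F) (hnn : ∀ y, 0 ≤ F y) (x : E3) :
    sInt L 2 (sInt L 1 (sInt L 0 F)) x
      = ∫ y in Set.univ.pi (fun _ : Fin 3 => Icc (-L) L), F y := by
  set μ : Fin 3 → Measure ℝ := fun _ => (volume : Measure ℝ).restrict (Icc (-L) L) with hμ
  have hpi : Measure.pi μ = (volume : Measure E3).restrict
      (Set.univ.pi (fun _ : Fin 3 => Icc (-L) L)) := by
    apply Measure.pi_eq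
    intro s hs
    rw [Measure.restrict_apply (MeasurableSet.univ_pi hs)]
    have : Set.univ.pi s ∩ Set.univ.pi (fun _ : Fin 3 => Icc (-L) L)
        = Set.univ.pi (fun i => s i ∩ Icc (-L) L) := by
      rw [← Set.pi_inter_distrib]
    rw [this, volume_pi_pi]
    simp [hμ, Measure.restrict_apply (hs _)]
  have hmeas : Measurable (fun y : E3 => ENNReal.ofReal (F y)) :=
    ENNReal.measurable_ofReal.comp hF.measurable
  have huniv : (Finset.univ : Finset (Fin 3)) = insert 2 (insert 1 {0}) := by decide
  have hlm : ∫⁻ y, ENNReal.ofReal (F y) ∂(Measure.pi μ)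
      = ∫⁻ t2, ∫⁻ t1, ∫⁻ t0, ENNReal.ofReal
          (F (update (update (update x 2 t2) 1 t1) 0 t0)) ∂(μ 0) ∂(μ 1) ∂(μ 2) := by
    rw [MeasureTheory.lintegral_eq_lmarginal_univ x, huniv,
      MeasureTheory.lmarginal_insert _ hmeas (by decide)]
    congr 1; funext t2
    rw [MeasureTheory.lmarginal_insert _ hmeas (by decide)]
    congr 1; funext t1
    rw [MeasureTheory.lmarginal_singleton]
  -- convert inner to interval integrals
  have hS0c : Continuous (sInt L 0 F) := sInt_continuous hF 0
  have hS10c : Continuous (sInt L 1 (sInt L 0 F)) := sInt_continuous hS0c 1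
  have hS0nn : ∀ y, 0 ≤ sInt L 0 F y := fun y => sInt_nonneg hL hnn 0 y
  have hS10nn : ∀ y, 0 ≤ sInt L 1 (sInt L 0 F) y := fun y => sInt_nonneg hL hS0nn 1 y
  have inner0 : ∀ z : E3, ∫⁻ t0, ENNReal.ofReal (F (update z 0 t0)) ∂(μ 0)
      = ENNReal.ofReal (sInt L 0 F z) := by
    intro z
    rw [hμ]
    exact oneD_conv hL (cont_slice hF 0 z) (fun t => hnn _)
  have inner1 : ∀ z : E3, ∫⁻ t1, ENNReal.ofReal (sInt L 0 F (update z 1 t1)) ∂(μ 1)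
      = ENNReal.ofReal (sInt L 1 (sInt L 0 F) z) := by
    intro z
    rw [hμ]
    exact oneD_conv hL (cont_slice hS0c 1 z) (fun t => hS0nn _)
  have inner2 : ∫⁻ t2, ENNReal.ofReal (sInt L 1 (sInt L 0 F) (update x 2 t2)) ∂(μ 2)
      = ENNReal.ofReal (sInt L 2 (sInt L 1 (sInt L 0 F)) x) := by
    rw [hμ]
    exact oneD_conv hL (cont_slice hS10c 2 x) (fun t => hS10nn _)
  have hlm2 : ∫⁻ y, ENNReal.ofReal (F y) ∂(Measure.pi μ)
      = ENNReal.ofReal (sInt L 2 (sInt L 1 (sInt L 0 F)) x) := by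
    rw [hlm, ← inner2]
    congr 1; funext t2
    rw [← inner1]
    congr 1; funext t1
    exact inner0 _
  have hbr : ∫ y in Set.univ.pi (fun _ : Fin 3 => Icc (-L) L), F y
      = (∫⁻ y, ENNReal.ofReal (F y) ∂(Measure.pi μ)).toReal := by
    rw [hpi]
    rw [MeasureTheory.integral_eq_lintegral_of_nonneg_ae
      (Filter.Eventually.of_forall (fun y => hnn y)) hF.aestronglyMeasurable.restrict]
  rw [hbr, hlm2, ENNReal.toReal_ofReal]
  exact sInt_nonneg hL hS10nn 2 x


lemma per_zsmul {g : E3 → ℝ} (hp : Per L g) (k : ℤ) (z : E3) (j : Fin 3) :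
    g (z + k • Pi.single j (2*L)) = g z := by
  induction k using Int.induction_on with
  | zero => simp
  | succ n ih =>
      have : z + ((n : ℤ) + 1) • Pi.single j (2*L)
          = (z + (n : ℤ) • Pi.single j (2*L)) + Pi.single j (2*L) := by
        rw [add_smul, one_smul, add_assoc]
      rw [this, hp _ j, ih]
  | pred n ih =>
      have hc : (-(n : ℤ) - 1) = -((n : ℤ) + 1) := by ring
      have hstep := hp ((z + (-(n : ℤ) - 1) • Pi.single j (2*L))) j
      have heq : (z + (-(n : ℤ) - 1) • Pi.single j (2*L)) + Pi.single j (2*L)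
          = z + (-(n : ℤ)) • Pi.single j (2*L) := by
        rw [sub_smul, one_smul]; abel
      rw [heq] at hstep
      exact hstep.symm.trans ih

lemma per_reduce (hL : 0 < L) {g : E3 → ℝ} (hp : Per L g) (x : E3) :
    ∃ x' : E3, (∀ j, x' j ∈ Icc (-L) L) ∧ g x' = g x := by
  have h2L : (0:ℝ) < 2*L := by linarith
  refine ⟨x + (-(round (x 0 / (2*L)))) • (Pi.single 0 (2*L) : E3)
    + (-(round (x 1 / (2*L)))) • (Pi.single 1 (2*L) : E3)
    + (-(round (x 2 / (2*L)))) • (Pi.single 2 (2*L) : E3), ?_, ?_⟩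
  · intro j
    have hco : (x + (-(round (x 0 / (2*L)))) • (Pi.single 0 (2*L) : E3)
        + (-(round (x 1 / (2*L)))) • (Pi.single 1 (2*L) : E3)
        + (-(round (x 2 / (2*L)))) • (Pi.single 2 (2*L) : E3)) j
        = x j - ((round (x j / (2*L)) : ℤ) : ℝ) * (2*L) := by
      simp only [Pi.add_apply, Pi.smul_apply, Pi.single_apply, zsmul_eq_mul]
      fin_cases j <;> norm_num [Pi.single_apply, Fin.ext_iff] <;> ring_nf <;> rfl
    rw [hco]
    have hround := abs_le.mp (abs_sub_round (x j / (2*L)))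
    have hxj : x j = (x j / (2*L)) * (2*L) := by field_simp
    constructor
    · nlinarith [hround.1, hround.2]
    · nlinarith [hround.1, hround.2]
  · rw [per_zsmul hp, per_zsmul hp, per_zsmul hp]

lemma lipschitz_of_pd_bound {ϱ : E3 → ℝ} (hϱ : ContDiff ℝ (⊤ : ℕ∞) ϱ) {K : ℝ}
    (hK : ∀ (j : Fin 3) (z : E3), |pd j ϱ z| ≤ K) (x y : E3) :
    |ϱ y - ϱ x| ≤ 3*K*‖y - x‖ := by
  have hKnn : 0 ≤ K := le_trans (abs_nonneg _) (hK 0 0)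
  have hbd : ∀ z : E3, ‖fderiv ℝ ϱ z‖ ≤ 3*K := by
    intro z
    apply ContinuousLinearMap.opNorm_le_bound _ (by linarith)
    intro v
    have hv : v = ∑ j : Fin 3, (v j) • (Pi.single j 1 : E3) := by
      have := Finset.univ_sum_single v
      rw [← this]
      congr 1
      funext j
      rw [← Pi.single_smul]
      simp
    have hsum : fderiv ℝ ϱ z v = ∑ j : Fin 3, (v j) * pd j ϱ z := by
      conv_lhs => rw [hv]
      rw [map_sum]
      refine Finset.sum_congr rfl (fun j _ => ?_)
      rw [(fderiv ℝ ϱ z).map_smul, smul_eq_mul]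
      rfl
    rw [Real.norm_eq_abs, hsum]
    have h3 : |∑ j : Fin 3, (v j) * pd j ϱ z| ≤ ∑ j : Fin 3, |v j| * |pd j ϱ z| := by
      refine le_trans (Finset.abs_sum_le_sum_abs _ _) ?_
      refine Finset.sum_le_sum (fun j _ => ?_)
      rw [abs_mul]
    refine le_trans h3 ?_
    have hterm : ∀ j : Fin 3, |v j| * |pd j ϱ z| ≤ ‖v‖ * K := by
      intro j
      have h1 : |v j| ≤ ‖v‖ := by
        have := norm_le_pi_norm v j
        simpa [Real.norm_eq_abs] using this
      exact mul_le_mul h1 (hK j z) (abs_nonneg _) (norm_nonneg _)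
    refine le_trans (Finset.sum_le_sum (fun j _ => hterm j)) ?_
    have hsum3 : ∑ _j : Fin 3, ‖v‖ * K = 3 * K * ‖v‖ := by
      rw [Finset.sum_const, Finset.card_univ]
      simp [Fintype.card_fin]
      ring
    rw [hsum3]
  have := Convex.norm_image_sub_le_of_norm_fderiv_le (𝕜 := ℝ) (f := ϱ) (C := 3*K)
    (s := Set.univ) (fun z _ => (hϱ.differentiable (by simp) z)) (fun z _ => hbd z)
    convex_univ (Set.mem_univ x) (Set.mem_univ y)
  simpa [Real.norm_eq_abs] using this


/-- lower bound for the integral of `ϱ⁻⁶` via a small box around a point -/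
lemma low_bound (hL : 0 < L) {ϱ : E3 → ℝ} (hsm : Continuous ϱ) (hpos : ∀ y, 0 < ϱ y)
    {Kb : ℝ} (hKbnn : 0 ≤ Kb) (hlip : ∀ y : E3, |ϱ y - ϱ (x':E3)| ≤ 3*Kb*‖y - x'‖)
    (hx' : ∀ j, x' j ∈ Icc (-L) L) {r : ℝ} (hrpos : 0 < r) (hrL : r ≤ L)
    (hra : r ≤ ϱ x' / (2*(3*Kb+1))) :
    ((2 * ϱ x')⁻¹)^6 * r^3
      ≤ ∫ y in Set.univ.pi fun _ : Fin 3 => Icc (-L) L, ((ϱ y)⁻¹)^6 := by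
  have hapos : 0 < ϱ x' := hpos x'
  have hcpt : IsCompact (Set.univ.pi fun _ : Fin 3 => Icc (-L) L) :=
    isCompact_univ_pi fun _ => isCompact_Icc
  have hmeas : MeasurableSet (Set.univ.pi fun _ : Fin 3 => Icc (-L) L) :=
    MeasurableSet.univ_pi fun _ => measurableSet_Icc
  have hu6c : Continuous fun y : E3 => ((ϱ y)⁻¹)^6 :=
    (hsm.inv₀ fun y => ne_of_gt (hpos y)).pow 6
  have hu6int : IntegrableOn (fun y => ((ϱ y)⁻¹)^6)
      (Set.univ.pi fun _ : Fin 3 => Icc (-L) L) volume :=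
    hu6c.continuousOn.integrableOn_compact' hcpt hmeas
  set c : Fin 3 → ℝ := fun j => if x' j ≤ 0 then x' j else x' j - r with hcdef
  have hQmeas : MeasurableSet (Set.univ.pi fun j => Icc (c j) (c j + r)) :=
    MeasurableSet.univ_pi fun _ => measurableSet_Icc
  have hQsub : (Set.univ.pi fun j => Icc (c j) (c j + r))
      ⊆ Set.univ.pi fun _ : Fin 3 => Icc (-L) L := by
    intro y hy
    rw [Set.mem_univ_pi]
    intro j
    have hyj := (Set.mem_univ_pi.mp hy) j
    have hxj := hx' j
    rw [Set.mem_Icc] at hyj hxj ⊢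
    simp only [hcdef] at hyj
    split_ifs at hyj with hcase
    · exact ⟨by linarith [hyj.1, hxj.1], by linarith [hyj.2, hxj.2, hrL]⟩
    · push_neg at hcase
      exact ⟨by linarith [hyj.1, hxj.1, hrL], by linarith [hyj.2, hxj.2]⟩
  have hsmall : ∀ y ∈ (Set.univ.pi fun j => Icc (c j) (c j + r)), ϱ y ≤ 2 * ϱ x' := by
    intro y hy
    have hnear : ‖y - x'‖ ≤ r := by
      rw [pi_norm_le_iff_of_nonneg hrpos.le]
      intro j
      have hyj := (Set.mem_univ_pi.mp hy) j
      rw [Set.mem_Icc] at hyj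
      simp only [hcdef] at hyj
      simp only [Pi.sub_apply, Real.norm_eq_abs, abs_le]
      split_ifs at hyj with hcase
      · exact ⟨by linarith [hyj.1], by linarith [hyj.2]⟩
      · exact ⟨by linarith [hyj.1], by linarith [hyj.2]⟩
    have h2 : 3*Kb*‖y - x'‖ ≤ 3*Kb*r := mul_le_mul_of_nonneg_left hnear (by positivity)
    have h3 : (3*Kb+1) * r ≤ ϱ x' / 2 := by
      have h31 := mul_le_mul_of_nonneg_left hra (by positivity : (0:ℝ) ≤ 3*Kb+1)
      calc (3*Kb+1) * r ≤ (3*Kb+1) * (ϱ x' / (2*(3*Kb+1))) := h31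
        _ = ϱ x' / 2 := by field_simp
    have h5 := (abs_le.mp (hlip y)).2
    nlinarith [hrpos.le]
  have hvolQ : (volume (Set.univ.pi fun j => Icc (c j) (c j + r))).toReal = r^3 := by
    rw [volume_pi_pi]
    have hv : ∀ j : Fin 3, volume (Icc (c j) (c j + r)) = ENNReal.ofReal r := by
      intro j
      rw [Real.volume_Icc]
      congr 1
      ring
    simp only [hv, Finset.prod_const, Finset.card_univ, Fintype.card_fin]
    rw [ENNReal.toReal_pow, ENNReal.toReal_ofReal hrpos.le]
  have hQfin : volume (Set.univ.pi fun j => Icc (c j) (c j + r)) ≠ ⊤ := by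
    rw [volume_pi_pi]
    simp only [Real.volume_Icc]
    exact ENNReal.prod_ne_top fun _ _ => ENNReal.ofReal_ne_top
  have hlow : ∀ y ∈ (Set.univ.pi fun j => Icc (c j) (c j + r)),
      ((2 * ϱ x')⁻¹)^6 ≤ ((ϱ y)⁻¹)^6 := by
    intro y hy
    have h1 : (2 * ϱ x')⁻¹ ≤ (ϱ y)⁻¹ := inv_anti₀ (hpos y) (hsmall y hy)
    exact pow_le_pow_left₀ (by positivity) h1 6
  have hstep1 : ((2 * ϱ x')⁻¹)^6 * r^3
      ≤ ∫ y in (Set.univ.pi fun j => Icc (c j) (c j + r)), ((ϱ y)⁻¹)^6 := by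
    have hconst : ∫ _y in (Set.univ.pi fun j => Icc (c j) (c j + r)), ((2 * ϱ x')⁻¹)^6
        = (volume (Set.univ.pi fun j => Icc (c j) (c j + r))).toReal * ((2 * ϱ x')⁻¹)^6 := by
      rw [setIntegral_const, smul_eq_mul, measureReal_def]
    have hmono := setIntegral_mono_on
      (MeasureTheory.integrableOn_const hQfin)
      (hu6int.mono_set hQsub) hQmeas hlow
    rw [hconst, hvolQ] at hmono
    linarith [hmono]
  have hstep2 : ∫ y in (Set.univ.pi fun j => Icc (c j) (c j + r)), ((ϱ y)⁻¹)^6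
      ≤ ∫ y in Set.univ.pi fun _ : Fin 3 => Icc (-L) L, ((ϱ y)⁻¹)^6 :=
    setIntegral_mono_set hu6int (Filter.Eventually.of_forall fun y => by positivity)
      (HasSubset.Subset.eventuallyLE hQsub)
  linarith

/-- pure arithmetic: from the box bound to the inverse bound -/
lemma case_arith {L a Kb t : ℝ} (hL : 0 < L) (ha : 0 < a) (hKb : 0 ≤ Kb) (htnn : 0 ≤ t)
    (hkey : ∀ r, 0 < r → r ≤ L → r ≤ a/(2*(3*Kb+1)) → ((2*a)⁻¹)^6 * r^3 ≤ t) :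
    a⁻¹ ≤ 2*Real.sqrt (1/L) * t^((1:ℝ)/6) + 8*(3*Kb+1)*(t^((1:ℝ)/6))^2 := by
  have hKp : (0:ℝ) < 3*Kb+1 := by positivity
  have hB6 : (t^((1:ℝ)/6))^(6:ℕ) = t := by
    rw [← Real.rpow_natCast (t ^ ((1:ℝ)/6)) 6, ← Real.rpow_mul htnn]
    norm_num
  have hBnn : 0 ≤ t^((1:ℝ)/6) := Real.rpow_nonneg htnn _
  have hsqnn : 0 ≤ Real.sqrt (1/L) := Real.sqrt_nonneg _
  rcases le_total (a/(2*(3*Kb+1))) L with hcase | hcase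
  · -- r = a/(2Kp)
    have hkey2 := hkey (a/(2*(3*Kb+1))) (by positivity) hcase le_rfl
    have h8 : (a⁻¹)^3 ≤ (8*(3*Kb+1)*(t^((1:ℝ)/6))^2)^3 := by
      have he : ((2*a)⁻¹)^6 * (a/(2*(3*Kb+1)))^3 = (a⁻¹)^3/(512*(3*Kb+1)^3) := by
        field_simp
        ring
      rw [he] at hkey2
      have he2 : (8*(3*Kb+1)*(t^((1:ℝ)/6))^2)^3 = 512*(3*Kb+1)^3*((t^((1:ℝ)/6))^(6:ℕ)) := by
        ring
      rw [he2, hB6]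
      have h512 : (0:ℝ) < 512*(3*Kb+1)^3 := by positivity
      calc (a⁻¹)^3 = ((a⁻¹)^3/(512*(3*Kb+1)^3)) * (512*(3*Kb+1)^3) := by field_simp
        _ ≤ t * (512*(3*Kb+1)^3) := mul_le_mul_of_nonneg_right hkey2 h512.le
        _ = 512*(3*Kb+1)^3*t := by ring
    have hfin := le_of_pow_le_pow_left₀ (by norm_num) (by positivity) h8
    nlinarith [mul_nonneg (mul_nonneg (by norm_num : (0:ℝ) ≤ 2) hsqnn) hBnn]
  · -- r = L
    have hkey2 := hkey L hL le_rfl hcase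
    have h6 : (a⁻¹)^6 ≤ (2*Real.sqrt (1/L) * t^((1:ℝ)/6))^6 := by
      have hsq : (Real.sqrt (1/L))^6 = (1/L)^3 := by
        rw [show (6:ℕ) = 2*3 from rfl, pow_mul, Real.sq_sqrt (by positivity)]
      have he : (2*Real.sqrt (1/L) * t^((1:ℝ)/6))^6
          = 64 * ((t^((1:ℝ)/6))^(6:ℕ)) * ((Real.sqrt (1/L))^6) := by ring
      rw [he, hB6, hsq]
      have he2 : ((2*a)⁻¹)^6 * L^3 = (a⁻¹)^6 * L^3 / 64 := by
        field_simp
        ring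
      rw [he2] at hkey2
      calc (a⁻¹)^6 = ((a⁻¹)^6 * L^3/64) * (64/L^3) := by field_simp
        _ ≤ t * (64/L^3) := mul_le_mul_of_nonneg_right hkey2 (by positivity)
        _ = 64 * t * (1/L)^3 := by field_simp
    have hfin := le_of_pow_le_pow_left₀ (by norm_num) (by positivity) h6
    nlinarith [mul_nonneg (mul_nonneg (by norm_num : (0:ℝ) ≤ 8) hKp.le)
      (pow_nonneg hBnn 2)]

/-- pure arithmetic: final constant juggling -/
lemma final_arith {A B s c1 Kb : ℝ} (hA : 0 ≤ A) (hB : 0 ≤ B) (hs : 0 ≤ s)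
    (hc1 : 0 ≤ c1) (hKbA : Kb ≤ s * A) :
    c1 * B + 8*(3*Kb+1)*B^2 ≤ (c1 + 8*(3*s+1)) * (1+A)^2 * (1+B)^3 := by
  have e1 : B ≤ (1+B)^3 := by nlinarith [pow_nonneg hB 2, pow_nonneg hB 3, sq_nonneg B]
  have e2 : (1:ℝ) ≤ (1+A)^2 := by nlinarith
  have hfac1 : B ≤ (1+A)^2 * (1+B)^3 :=
    e1.trans (le_mul_of_one_le_left (by positivity) e2)
  have hKpA : 3*Kb+1 ≤ (3*s+1) * (1+A) := by nlinarith
  have e4 : B^2 ≤ (1+B)^3 := by nlinarith [pow_nonneg hB 3]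
  have hfac2 : (1+A) * B^2 ≤ (1+A)^2 * (1+B)^3 := by
    have f1 : (1+A)*B^2 ≤ (1+A)*(1+B)^3 := mul_le_mul_of_nonneg_left e4 (by positivity)
    have f2 : (1+A)*(1+B)^3 ≤ ((1+A)^2)*(1+B)^3 :=
      mul_le_mul_of_nonneg_right (by nlinarith) (by positivity)
    linarith
  have h1 : 8*(3*Kb+1)*B^2 ≤ 8*((3*s+1)*(1+A))*B^2 := by
    have := mul_le_mul_of_nonneg_right hKpA (pow_nonneg hB 2)
    nlinarith [this]
  have h2 : 8*((3*s+1)*(1+A))*B^2 ≤ 8*(3*s+1)*((1+A)^2 * (1+B)^3) := by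
    have := mul_le_mul_of_nonneg_left hfac2 (by positivity : (0:ℝ) ≤ 8*(3*s+1))
    nlinarith [this]
  have h3 : c1 * B ≤ c1 * ((1+A)^2 * (1+B)^3) := mul_le_mul_of_nonneg_left hfac1 hc1
  have hX : (c1 + 8*(3*s+1)) * (1+A)^2 * (1+B)^3
      = c1 * ((1+A)^2 * (1+B)^3) + 8*(3*s+1)*((1+A)^2 * (1+B)^3) := by ring
  linarith [h1, h2, h3]

end S10

open S10

/-- On the torus `𝕋³_L` there is a constant `C` (independent of `ϱ`) such that for every
smooth strictly positive `2L`-periodic `ϱ`,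
`‖ϱ⁻¹‖_{L^∞} ≤ C (1 + ‖ϱ‖_{H³})² (1 + ‖ϱ⁻¹‖_{L⁶})³`. -/
theorem stmt10 (L : ℝ) (hL : 0 < L) :
    ∃ C : ℝ, 0 < C ∧ ∀ ϱ : (Fin 3 → ℝ) → ℝ,
      ContDiff ℝ (⊤ : ℕ∞) ϱ → (∀ x, 0 < ϱ x) →
      (∀ (x : Fin 3 → ℝ) (i : Fin 3), ϱ (x + Pi.single i (2*L)) = ϱ x) →
      ∀ x : Fin 3 → ℝ, (ϱ x)⁻¹ ≤
        C * (1 + Real.sqrt (∑ m ∈ Finset.range 4,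
              ∫ y in Set.univ.pi fun _ : Fin 3 => Set.Icc (-L) L,
                ‖iteratedFDeriv ℝ m ϱ y‖^2))^2
          * (1 + (∫ y in Set.univ.pi fun _ : Fin 3 => Set.Icc (-L) L,
                ((ϱ y)⁻¹)^6) ^ ((1:ℝ)/6))^3 := by
  refine ⟨2 * Real.sqrt (1/L) + 8*(3*Real.sqrt (CC L)+1), by positivity, ?_⟩
  intro ϱ hsm hpos hper x
  have hPer : Per L ϱ := hper
  have hcpt : IsCompact (Set.univ.pi fun _ : Fin 3 => Set.Icc (-L) L) :=
    isCompact_univ_pi fun _ => isCompact_Icc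
  have hmeas : MeasurableSet (Set.univ.pi fun _ : Fin 3 => Set.Icc (-L) L) :=
    MeasurableSet.univ_pi fun _ => measurableSet_Icc
  -- notation
  obtain ⟨x', hx', hxx⟩ := per_reduce hL hPer x
  have hLHS : (ϱ x)⁻¹ = (ϱ x')⁻¹ := by rw [hxx]
  rw [hLHS]
  have hapos : 0 < ϱ x' := hpos x'
  -- A2 and the integral of Smaj
  have hSint : ∫ y in Set.univ.pi fun _ : Fin 3 => Set.Icc (-L) L, Smaj ϱ y
      = ∑ m ∈ Finset.range 4, ∫ y in Set.univ.pi fun _ : Fin 3 => Set.Icc (-L) L,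
        ‖iteratedFDeriv ℝ m ϱ y‖^2 := by
    unfold Smaj
    rw [MeasureTheory.integral_finset_sum]
    intro m _
    exact (((hsm.continuous_iteratedFDeriv (m := m) (by exact_mod_cast le_top)).norm.pow
      2).continuousOn.integrableOn_compact' hcpt hmeas)
  have hA2nn : 0 ≤ ∑ m ∈ Finset.range 4, ∫ y in Set.univ.pi fun _ : Fin 3 => Set.Icc (-L) L,
      ‖iteratedFDeriv ℝ m ϱ y‖^2 := by
    apply Finset.sum_nonneg
    intro m _
    exact setIntegral_nonneg hmeas fun y _ => by positivity
  -- K bound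
  have hKbound : ∀ (j : Fin 3) (z : Fin 3 → ℝ), |pd j ϱ z|
      ≤ Real.sqrt (CC L * (∑ m ∈ Finset.range 4,
        ∫ y in Set.univ.pi fun _ : Fin 3 => Set.Icc (-L) L,
          ‖iteratedFDeriv ℝ m ϱ y‖^2)) := by
    intro j z
    obtain ⟨z', hz', hzz⟩ := per_reduce hL (Per.pd hsm hPer j) z
    rw [← hzz]
    have hb := pd_sq_bound hL hsm hPer j z' hz'
    rw [conv hL (Smaj_continuous hsm) (Smaj_nonneg ϱ) z', hSint] at hb
    exact Real.abs_le_sqrt hb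
  have hlip : ∀ y : (Fin 3 → ℝ), |ϱ y - ϱ x'|
      ≤ 3 * Real.sqrt (CC L * (∑ m ∈ Finset.range 4,
        ∫ y in Set.univ.pi fun _ : Fin 3 => Set.Icc (-L) L,
          ‖iteratedFDeriv ℝ m ϱ y‖^2)) * ‖y - x'‖ :=
    fun y => lipschitz_of_pd_bound hsm hKbound x' y
  -- the t-integral
  have htnn : 0 ≤ ∫ y in Set.univ.pi fun _ : Fin 3 => Set.Icc (-L) L, ((ϱ y)⁻¹)^6 :=
    setIntegral_nonneg hmeas fun y _ => by positivity
  -- apply case_arith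
  have hmain := case_arith (a := ϱ x')
    (Kb := Real.sqrt (CC L * (∑ m ∈ Finset.range 4,
      ∫ y in Set.univ.pi fun _ : Fin 3 => Set.Icc (-L) L, ‖iteratedFDeriv ℝ m ϱ y‖^2)))
    (t := ∫ y in Set.univ.pi fun _ : Fin 3 => Set.Icc (-L) L, ((ϱ y)⁻¹)^6)
    hL hapos (Real.sqrt_nonneg _) htnn ?_
  · -- final arithmetic
    have hKbA : Real.sqrt (CC L * (∑ m ∈ Finset.range 4,
        ∫ y in Set.univ.pi fun _ : Fin 3 => Set.Icc (-L) L, ‖iteratedFDeriv ℝ m ϱ y‖^2))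
        ≤ Real.sqrt (CC L) * Real.sqrt (∑ m ∈ Finset.range 4,
          ∫ y in Set.univ.pi fun _ : Fin 3 => Set.Icc (-L) L,
            ‖iteratedFDeriv ℝ m ϱ y‖^2) :=
      le_of_eq (Real.sqrt_mul (le_of_lt (CC_pos hL)) _)
    have hfin := final_arith (A := Real.sqrt (∑ m ∈ Finset.range 4,
        ∫ y in Set.univ.pi fun _ : Fin 3 => Set.Icc (-L) L, ‖iteratedFDeriv ℝ m ϱ y‖^2))
      (B := (∫ y in Set.univ.pi fun _ : Fin 3 => Set.Icc (-L) L, ((ϱ y)⁻¹)^6) ^ ((1:ℝ)/6))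
      (s := Real.sqrt (CC L)) (c1 := 2 * Real.sqrt (1/L))
      (Real.sqrt_nonneg _) (Real.rpow_nonneg htnn _) (Real.sqrt_nonneg _)
      (by positivity) hKbA
    calc (ϱ x')⁻¹ ≤ _ := hmain
      _ ≤ _ := by
        refine le_trans hfin (le_of_eq ?_)
        ring
  · -- the key box bound, for all admissible r
    intro r hrpos hrL hra
    exact low_bound hL hsm.continuous hpos (Real.sqrt_nonneg _) hlip hx' hrpos hrL hra
end
end
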